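/- arXiv:2211.15121 — 10 statements merged into one kernel-verified Lean document; each statement's English description precedes it below -/
import Mathlib

section
/- Let X be a Banach space, F a finite-dimensional subspace of X, and ε > 0. Then there exists a closed subspace M ⊆ X of finite codimension such that ‖f + m‖ ≥ (1 − ε)·max{‖f‖, ‖m‖/2} for all f ∈ F and m ∈ M. -/
/-!
Choose a finite `δ/2`-net of the (compact) unit sphere of `F` and, by Hahn–Banach, a norm-one
functional norming each point of the net. On the intersection `M` of their kernels every such
functional sees only the `F`-component, so `(1 - δ) ‖f‖ ≤ ‖f + m‖`; the bound by `‖m‖ / 2`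
follows from `‖m‖ ≤ ‖f + m‖ + ‖f‖`.
-/

open Metric

section
variable {𝕜 X : Type*} [RCLike 𝕜] [NormedAddCommGroup X] [NormedSpace 𝕜 X]

theorem IsCompact.exists_finset_strongDual_norm_sub_le {K : Set X} (hK : IsCompact K) {δ : ℝ}
    (hδ : 0 < δ) :
    ∃ s : Finset (StrongDual 𝕜 X), (∀ g ∈ s, ‖g‖ ≤ 1) ∧ ∀ x ∈ K, ∃ g ∈ s, ‖x‖ - δ ≤ ‖g x‖ := by
  classical
  obtain ⟨t, -, ht, hcover⟩ := finite_approx_of_totallyBounded hK.totallyBounded (δ / 2)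
    (by positivity)
  choose g hg_norm hg_apply using fun y : X => exists_dual_vector'' 𝕜 y
  refine ⟨ht.toFinset.image g, by simpa using fun y _ => hg_norm y, fun x hx => ?_⟩
  obtain ⟨y, hyt, hxy⟩ := Set.mem_iUnion₂.mp (hcover hx)
  rw [mem_ball, dist_eq_norm] at hxy
  refine ⟨g y, Finset.mem_image_of_mem g (ht.mem_toFinset.mpr hyt), ?_⟩
  have hgy : ‖g y y‖ = ‖y‖ := by rw [hg_apply, RCLike.norm_ofReal, abs_norm]
  have hgxy : ‖g y y - g y x‖ ≤ ‖x - y‖ := by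
    simpa [norm_sub_rev] using (g y).le_of_opNorm_le (hg_norm y) (y - x)
  have htri := norm_sub_norm_le (g y y) (g y y - g y x)
  rw [hgy, sub_sub_cancel] at htri
  linarith [norm_le_norm_add_norm_sub' x y]

theorem norm_mul_le_norm_add_of_forall_norm_eq_one (F M : Submodule 𝕜 X) {c : ℝ}
    (h : ∀ f ∈ F, ‖f‖ = 1 → ∀ m ∈ M, c ≤ ‖f + m‖) :
    ∀ f ∈ F, ∀ m ∈ M, c * ‖f‖ ≤ ‖f + m‖ := by
  intro f hf m hm
  rcases eq_or_ne f 0 with rfl | hf0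
  · simp
  have hu := h ((‖f‖ : 𝕜)⁻¹ • f) (F.smul_mem _ hf) (norm_smul_inv_norm hf0)
    ((‖f‖ : 𝕜)⁻¹ • m) (M.smul_mem _ hm)
  rw [← smul_add, norm_smul, norm_inv, RCLike.norm_ofReal, abs_norm] at hu
  rwa [le_inv_mul_iff₀ (norm_pos_iff.mpr hf0), mul_comm] at hu

theorem Submodule.exists_isClosed_finiteDimensional_quotient_one_sub_mul_norm_le
    (F : Submodule 𝕜 X) [FiniteDimensional 𝕜 F] {δ : ℝ} (hδ : 0 < δ) :
    ∃ M : Submodule 𝕜 X, IsClosed (M : Set X) ∧ FiniteDimensional 𝕜 (X ⧸ M) ∧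
      ∀ f ∈ F, ∀ m ∈ M, (1 - δ) * ‖f‖ ≤ ‖f + m‖ := by
  have : ProperSpace F := FiniteDimensional.proper 𝕜 F
  obtain ⟨s, hs_norm, hs⟩ := (isCompact_sphere (0 : F) 1).image continuous_subtype_val
    |>.exists_finset_strongDual_norm_sub_le (𝕜 := 𝕜) hδ
  let L : X →L[𝕜] (s → 𝕜) := ContinuousLinearMap.pi fun g : s => (g : StrongDual 𝕜 X)
  have hL : ∀ m ∈ L.ker, ∀ g ∈ s, g m = 0 := fun m hm g hg =>
    congr_fun (LinearMap.mem_ker.mp hm) ⟨g, hg⟩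
  refine ⟨L.ker, L.isClosed_ker,
    (L : X →ₗ[𝕜] (s → 𝕜)).quotKerEquivRange.symm.finiteDimensional,
    norm_mul_le_norm_add_of_forall_norm_eq_one F _ fun f hf hf1 m hm => ?_⟩
  obtain ⟨g, hg, hgf⟩ := hs f ⟨⟨f, hf⟩, by simpa using hf1, rfl⟩
  calc 1 - δ ≤ ‖g f‖ := by rwa [hf1] at hgf
    _ = ‖g (f + m)‖ := by rw [map_add, hL m hm g hg, add_zero]
    _ ≤ ‖f + m‖ := by simpa using g.le_of_opNorm_le (hs_norm g hg) (f + m)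

end

theorem one_sub_mul_max_le {a b c ε : ℝ} (hc : 0 ≤ c) (hε : 0 ≤ ε)
    (hac : (1 - ε) * a ≤ c) (hb : b ≤ c + a) : (1 - ε) * max a (b / 2) ≤ c := by
  rcases le_total 1 ε with hε1 | hε1
  · nlinarith [le_max_left a (b / 2)]
  · rw [mul_max_of_nonneg _ _ (by linarith)]
    exact max_le hac (by nlinarith)

theorem stmt_0_general (X : Type*) [NormedAddCommGroup X] [NormedSpace ℂ X]
    (F : Submodule ℂ X) (hF : FiniteDimensional ℂ F) (ε : ℝ) (hε : 0 < ε) :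
    ∃ M : Submodule ℂ X, IsClosed (M : Set X) ∧ FiniteDimensional ℂ (X ⧸ M) ∧
      ∀ f ∈ F, ∀ m ∈ M, ‖f + m‖ ≥ (1 - ε) * max ‖f‖ (‖m‖ / 2) := by
  obtain ⟨M, hM_closed, hM_codim, hM⟩ :=
    F.exists_isClosed_finiteDimensional_quotient_one_sub_mul_norm_le hε
  refine ⟨M, hM_closed, hM_codim, fun f hf m hm => ?_⟩
  refine one_sub_mul_max_le (norm_nonneg _) hε.le (hM f hf m hm) ?_
  simpa using norm_sub_le (f + m) f

/-- For a finite-dimensional subspace `F` of a Banach space `X` and `ε > 0`, there is a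
closed finite-codimensional subspace `M` with `‖f + m‖ ≥ (1 - ε) max{‖f‖, ‖m‖/2}`. -/
theorem stmt_0 (X : Type*) [NormedAddCommGroup X] [NormedSpace ℂ X] [CompleteSpace X]
    (F : Submodule ℂ X) (hF : FiniteDimensional ℂ F) (ε : ℝ) (hε : 0 < ε) :
    ∃ M : Submodule ℂ X, IsClosed (M : Set X) ∧ FiniteDimensional ℂ (X ⧸ M) ∧
      ∀ f ∈ F, ∀ m ∈ M, ‖f + m‖ ≥ (1 - ε) * max ‖f‖ (‖m‖ / 2) :=
  stmt_0_general X F hF ε hε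
end

section
/- Let X be a Banach space, Λ ⊆ X* a norming set (i.e. ‖x‖ = sup{|⟨x, y⟩|/‖y‖ : y ∈ Λ, y ≠ 0} for all x ∈ X), F a finite-dimensional subspace of X, and ε > 0. Then there exist finitely many functionals y₁*, …, y_k* ∈ Λ such that M = ⋂_{j=1}^k Ker(y_j*) satisfies ‖f + m‖ ≥ (1 − ε)·max{‖f‖, ‖m‖/2} for all f ∈ F and m ∈ M. -/
/-!
Each point `x` of the unit sphere of `F` is almost normed by a single `y ∈ Λ`, and the strict
inequality `(‖u‖ - ε) * ‖y‖ < ‖y u‖` persists on a neighbourhood of `x`; on `ker y` it gives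
`‖u‖ - ε < ‖u + m‖`, because `y (u + m) = y u`. Compactness of the sphere leaves finitely many
`y`, and homogeneity extends the bound to `(1 - ε) ‖f‖ ≤ ‖f + m‖` for all `f ∈ F`. Finally
`‖m‖ ≤ ‖f + m‖ + ‖f‖` turns this into the bound by `(1 - ε) ‖m‖ / 2`.
-/

open Filter Topology

def commonKer {𝕜 X : Type*} [NontriviallyNormedField 𝕜] [SeminormedAddCommGroup X]
    [NormedSpace 𝕜 X] (s : Finset (X →L[𝕜] 𝕜)) : Submodule 𝕜 X :=
  ⨅ y ∈ s, LinearMap.ker (y : X →ₗ[𝕜] 𝕜)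

@[simp]
theorem mem_commonKer {𝕜 X : Type*} [NontriviallyNormedField 𝕜] [SeminormedAddCommGroup X]
    [NormedSpace 𝕜 X] {s : Finset (X →L[𝕜] 𝕜)} {m : X} : m ∈ commonKer s ↔ ∀ y ∈ s, y m = 0 := by
  simp [commonKer, Submodule.mem_iInf]

def IsNorming {𝕜 X : Type*} [NontriviallyNormedField 𝕜] [SeminormedAddCommGroup X]
    [NormedSpace 𝕜 X] (Λ : Set (X →L[𝕜] 𝕜)) : Prop :=
  ∀ x : X, ‖x‖ = sSup {r : ℝ | ∃ y ∈ Λ, y ≠ 0 ∧ r = ‖y x‖ / ‖y‖}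

namespace IsNorming

variable {𝕜 X : Type*} [NontriviallyNormedField 𝕜] [NormedAddCommGroup X] [NormedSpace 𝕜 X]
  {Λ : Set (X →L[𝕜] 𝕜)}

theorem exists_mul_norm_lt (hΛ : IsNorming Λ) {x : X} {r : ℝ} (hr : 0 ≤ r) (hrx : r < ‖x‖) :
    ∃ y ∈ Λ, r * ‖y‖ < ‖y x‖ := by
  have hne : {r : ℝ | ∃ y ∈ Λ, y ≠ 0 ∧ r = ‖y x‖ / ‖y‖}.Nonempty := by
    by_contra hempty
    rw [Set.not_nonempty_iff_eq_empty] at hempty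
    have := hΛ x
    rw [hempty, Real.sSup_empty] at this
    linarith
  obtain ⟨_, ⟨y, hyΛ, hy0, rfl⟩, hry⟩ := exists_lt_of_lt_csSup hne (hΛ x ▸ hrx)
  exact ⟨y, hyΛ, (lt_div_iff₀ (norm_pos_iff.2 hy0)).1 hry⟩

theorem exists_finset_eventually_sub_lt_norm_add (hΛ : IsNorming Λ) (x : X) {δ : ℝ}
    (hδ : 0 < δ) :
    ∃ s : Finset (X →L[𝕜] 𝕜), ↑s ⊆ Λ ∧
      ∀ᶠ u in 𝓝 x, ∀ m ∈ commonKer s, ‖u‖ - δ < ‖u + m‖ := by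
  rcases lt_or_ge ‖x‖ δ with hx | hx
  · refine ⟨∅, by simp, ?_⟩
    filter_upwards [(isOpen_lt continuous_norm continuous_const).mem_nhds hx] with u hu m _
    linarith [norm_nonneg (u + m), show ‖u‖ < δ from hu]
  · obtain ⟨y, hyΛ, hy⟩ := hΛ.exists_mul_norm_lt (sub_nonneg.2 hx) (sub_lt_self _ hδ)
    refine ⟨{y}, by simpa using hyΛ, ?_⟩
    have hopen : IsOpen {u : X | (‖u‖ - δ) * ‖y‖ < ‖y u‖} := isOpen_lt (by fun_prop) (by fun_prop)
    filter_upwards [hopen.mem_nhds hy] with u hu m hm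
    have hym : y m = 0 := by simpa using hm
    refine lt_of_mul_lt_mul_right ?_ (norm_nonneg y)
    calc (‖u‖ - δ) * ‖y‖ < ‖y u‖ := hu
      _ = ‖y (u + m)‖ := by rw [map_add, hym, add_zero]
      _ ≤ ‖u + m‖ * ‖y‖ := by rw [mul_comm]; exact y.le_opNorm _

theorem exists_finset_sub_lt_norm_add_of_isCompact (hΛ : IsNorming Λ) {K : Set X}
    (hK : IsCompact K) {δ : ℝ} (hδ : 0 < δ) :
    ∃ s : Finset (X →L[𝕜] 𝕜), ↑s ⊆ Λ ∧
      ∀ u ∈ K, ∀ m ∈ commonKer s, ‖u‖ - δ < ‖u + m‖ := by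
  classical
  choose S hSΛ hS using fun x => hΛ.exists_finset_eventually_sub_lt_norm_add x hδ
  obtain ⟨t, -, hKt⟩ := hK.elim_nhds_subcover _ fun x _ => hS x
  refine ⟨t.biUnion S, by simpa using fun x _ => hSΛ x, fun u hu m hm => ?_⟩
  obtain ⟨x, hxt, hux⟩ := Set.mem_iUnion₂.1 (hKt hu)
  simp only [mem_commonKer, Finset.mem_biUnion, forall_exists_index, and_imp] at hm
  exact hux m (mem_commonKer.2 fun y => hm y x hxt)

end IsNorming

theorem mul_norm_le_norm_add_of_norm_eq_one {𝕜 X : Type*} [RCLike 𝕜] [SeminormedAddCommGroup X]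
    [NormedSpace 𝕜 X] {F M : Submodule 𝕜 X} {c : ℝ}
    (h : ∀ u ∈ F, ‖u‖ = 1 → ∀ m ∈ M, c ≤ ‖u + m‖) {f m : X} (hf : f ∈ F) (hm : m ∈ M) :
    c * ‖f‖ ≤ ‖f + m‖ := by
  rcases (norm_nonneg f).eq_or_lt with hf0 | hf0
  · simp [← hf0]
  set a : 𝕜 := ((‖f‖⁻¹ : ℝ) : 𝕜)
  have ha : ‖a‖ = ‖f‖⁻¹ := by simp [a]
  have hc := h (a • f) (F.smul_mem a hf) (by rw [norm_smul, ha, inv_mul_cancel₀ hf0.ne'])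
    (a • m) (M.smul_mem a hm)
  rw [← smul_add, norm_smul, ha, ← div_eq_inv_mul, le_div_iff₀ hf0] at hc
  exact hc

theorem mul_max_norm_le_of_mul_norm_le {E : Type*} [SeminormedAddCommGroup E] {c : ℝ}
    (hc : c ≤ 1) {f m : E} (h : c * ‖f‖ ≤ ‖f + m‖) : c * max ‖f‖ (‖m‖ / 2) ≤ ‖f + m‖ := by
  rcases le_total c 0 with hc0 | hc0
  · exact (mul_nonpos_of_nonpos_of_nonneg hc0 (le_max_of_le_left (norm_nonneg f))).trans
      (norm_nonneg _)
  rw [mul_max_of_nonneg _ _ hc0]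
  refine max_le h ?_
  have hm : ‖m‖ ≤ ‖f + m‖ + ‖f‖ := by simpa using norm_sub_le (f + m) f
  nlinarith [mul_le_mul_of_nonneg_left hm hc0, mul_le_of_le_one_left (norm_nonneg (f + m)) hc]

theorem IsNorming.exists_finset_mul_norm_le_norm_add {𝕜 X : Type*} [RCLike 𝕜]
    [NormedAddCommGroup X] [NormedSpace 𝕜 X] {Λ : Set (X →L[𝕜] 𝕜)} (hΛ : IsNorming Λ)
    (F : Submodule 𝕜 X) [FiniteDimensional 𝕜 F] {ε : ℝ} (hε : 0 < ε) :
    ∃ s : Finset (X →L[𝕜] 𝕜), ↑s ⊆ Λ ∧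
      ∀ f ∈ F, ∀ m ∈ commonKer s, (1 - ε) * ‖f‖ ≤ ‖f + m‖ := by
  have hK : IsCompact (((↑) : F → X) '' Metric.sphere 0 1) :=
    (isCompact_sphere 0 1).image continuous_subtype_val
  obtain ⟨s, hsΛ, hs⟩ := hΛ.exists_finset_sub_lt_norm_add_of_isCompact hK hε
  refine ⟨s, hsΛ, fun f hf m hm => mul_norm_le_norm_add_of_norm_eq_one (fun u hu hu1 m hm => ?_) hf hm⟩
  simpa [hu1] using (hs u ⟨⟨u, hu⟩, by simpa using hu1, rfl⟩ m hm).le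

theorem stmt_1_general (X : Type*) [NormedAddCommGroup X] [NormedSpace ℂ X]
    (Λ : Set (X →L[ℂ] ℂ))
    (hΛ : ∀ x : X, ‖x‖ = sSup {r : ℝ | ∃ y ∈ Λ, y ≠ 0 ∧ r = ‖y x‖ / ‖y‖})
    (F : Submodule ℂ X) (hF : FiniteDimensional ℂ F) (ε : ℝ) (hε : 0 < ε) :
    ∃ (k : ℕ) (y : Fin k → (X →L[ℂ] ℂ)), (∀ j, y j ∈ Λ) ∧
      ∀ f ∈ F, ∀ m : X, (∀ j, y j m = 0) →
        ‖f + m‖ ≥ (1 - ε) * max ‖f‖ (‖m‖ / 2) := by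
  obtain ⟨s, hsΛ, hs⟩ := IsNorming.exists_finset_mul_norm_le_norm_add hΛ F hε
  refine ⟨s.card, fun j => s.equivFin.symm j, fun j => hsΛ (s.equivFin.symm j).2,
    fun f hf m hm => ?_⟩
  have hmM : m ∈ commonKer s :=
    mem_commonKer.2 fun y hy => by simpa using hm (s.equivFin ⟨y, hy⟩)
  exact mul_max_norm_le_of_mul_norm_le (by linarith) (hs f hf m hmM)

/-- Variant with a norming set `Λ ⊆ X*`: the finite-codimensional subspace can be taken as
a finite intersection of kernels of functionals from `Λ`. -/
theorem stmt_1 (X : Type*) [NormedAddCommGroup X] [NormedSpace ℂ X] [CompleteSpace X]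
    (Λ : Set (X →L[ℂ] ℂ))
    (hΛ : ∀ x : X, ‖x‖ = sSup {r : ℝ | ∃ y ∈ Λ, y ≠ 0 ∧ r = ‖y x‖ / ‖y‖})
    (F : Submodule ℂ X) (hF : FiniteDimensional ℂ F) (ε : ℝ) (hε : 0 < ε) :
    ∃ (k : ℕ) (y : Fin k → (X →L[ℂ] ℂ)), (∀ j, y j ∈ Λ) ∧
      ∀ f ∈ F, ∀ m : X, (∀ j, y j m = 0) →
        ‖f + m‖ ≥ (1 - ε) * max ‖f‖ (‖m‖ / 2) :=
  stmt_1_general X Λ hΛ F hF ε hε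
end

section
/- Let X be a Banach space, A a bounded linear operator on X, n a natural number, and (K_j)_{j=1}^n continuous maps on X each of which maps bounded sets to precompact sets. Define f_j(x) = (A + K_j)∘⋯∘(A + K_1)(x) and f_0(x) = x. Then for every bounded set X₀ ⊆ X there exists a compact set C ⊆ X such that f_j(x) ∈ A^j x + C for all x ∈ X₀ and all j ∈ {1,…,n}. -/
open Pointwise


/-- Compact-deviation lemma for discrete iterations: the nonlinear iterates `f_j(x)` of
`x_{j+1} = (A + K_{j+1}) x_j` deviate from `A^j x` only within a fixed compact set,
uniformly over a bounded set of initial data `X₀` and `j ∈ {1,…,n}`. -/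
theorem stmt_2 (X : Type*) [NormedAddCommGroup X] [NormedSpace ℂ X] [CompleteSpace X]
    (A : X →L[ℂ] X) (n : ℕ) (K : ℕ → X → X)
    (hK : ∀ j, 1 ≤ j → j ≤ n → Continuous (K j) ∧
      ∀ B : Set X, Bornology.IsBounded B → IsCompact (closure (K j '' B)))
    (f : ℕ → X → X) (hf0 : ∀ x, f 0 x = x)
    (hfs : ∀ j x, f (j + 1) x = A (f j x) + K (j + 1) (f j x))
    (X₀ : Set X) (hX₀ : Bornology.IsBounded X₀) :
    ∃ C : Set X, IsCompact C ∧ ∀ x ∈ X₀, ∀ j, 1 ≤ j → j ≤ n →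
      ∃ c ∈ C, f j x = (A ^ j) x + c := by
  have H : ∀ j, j ≤ n → ∃ C : Set X, IsCompact C ∧ ∀ x ∈ X₀, f j x - (A ^ j) x ∈ C := by
    intro j
    induction j with
    | zero =>
      intro _
      exact ⟨{0}, isCompact_singleton, fun x hx => by simp [hf0]⟩
    | succ j ih =>
      intro hj1
      obtain ⟨C, hCc, hCm⟩ := ih (Nat.le_of_succ_le hj1)
      obtain ⟨hKcont, hKcomp⟩ := hK (j + 1) (Nat.succ_le_succ (Nat.zero_le j)) hj1
      have hsub : f j '' X₀ ⊆ (A ^ j) '' X₀ + C := by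
        rintro _ ⟨x, hx, rfl⟩
        exact ⟨(A ^ j) x, Set.mem_image_of_mem _ hx, f j x - (A ^ j) x, hCm x hx, by simp⟩
      have hBnd : Bornology.IsBounded (f j '' X₀) :=
        (((A ^ j).lipschitz.isBounded_image hX₀).add hCc.isBounded).subset hsub
      refine ⟨(⇑A '' C) + closure (K (j + 1) '' (f j '' X₀)),
        (hCc.image A.continuous).add (hKcomp _ hBnd), fun x hx => ?_⟩
      have h1 : f (j + 1) x - (A ^ (j + 1)) x
          = A (f j x - (A ^ j) x) + K (j + 1) (f j x) := by
        rw [hfs j x, pow_succ']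
        simp [map_sub]
        abel
      rw [h1]
      exact Set.add_mem_add (Set.mem_image_of_mem _ (hCm x hx))
        (subset_closure (Set.mem_image_of_mem _ (Set.mem_image_of_mem _ hx)))
  have H' : ∀ j, ∃ C : Set X, IsCompact C ∧
      (1 ≤ j → j ≤ n → ∀ x ∈ X₀, f j x - (A ^ j) x ∈ C) := by
    intro j
    by_cases hj : j ≤ n
    · obtain ⟨C, h1, h2⟩ := H j hj
      exact ⟨C, h1, fun _ _ => h2⟩
    · exact ⟨{0}, isCompact_singleton, fun _ h => absurd h hj⟩
  choose Cf h1 h2 using H'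
  refine ⟨⋃ j ∈ Finset.Icc 1 n, Cf j, ?_, ?_⟩
  · exact (Finset.Icc 1 n).finite_toSet.isCompact_biUnion (fun j _ => h1 j)
  · intro x hx j hj1 hjn
    exact ⟨f j x - (A ^ j) x,
      Set.mem_biUnion (Finset.mem_coe.mpr (Finset.mem_Icc.mpr ⟨hj1, hjn⟩)) (h2 j hj1 hjn x hx), by abel⟩
end

section
/- Let X be a Banach space, A a bounded linear operator on X, n a natural number, X₀ ⊆ X a bounded set, and (K_j)_{j=1}^n compact (continuous, mapping bounded sets to precompact sets) maps on X. Define the iterates f_n(x) = (A + K_n)⋯(A + K_1)x. Then for every ε > 0 there exists a finite-dimensional subspace F ⊆ X such that ‖f_n(x)‖ ≥ dist(A^n x, F) − ε for all x ∈ X₀. -/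
/-!
Writing `fⱼ x = Aʲ x - dⱼ x`, the defects satisfy `dⱼ₊₁ x = A (dⱼ x) - Kⱼ₊₁ (fⱼ x)`. Since `A` is
uniformly continuous, each `Kⱼ` maps bounded sets to totally bounded ones, and `fⱼ(X₀)` stays
bounded, induction shows that `dₙ(X₀)` is totally bounded. The span `F` of a finite `ε`-net of
`dₙ(X₀)` is finite-dimensional, and `dist(Aⁿ x, F) ≤ dist(dₙ x, F) + ‖Aⁿ x - dₙ x‖ < ε + ‖fₙ x‖`.
-/

open Bornology Metric Pointwise

theorem TotallyBounded.add {E : Type*} [SeminormedAddCommGroup E] {s t : Set E}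
    (hs : TotallyBounded s) (ht : TotallyBounded t) : TotallyBounded (s + t) := by
  refine totallyBounded_iff.mpr fun ε hε => ?_
  obtain ⟨a, ha, hsa⟩ := totallyBounded_iff.mp hs (ε / 2) (half_pos hε)
  obtain ⟨b, hb, htb⟩ := totallyBounded_iff.mp ht (ε / 2) (half_pos hε)
  refine ⟨a + b, ha.add hb, ?_⟩
  rintro _ ⟨x, hx, y, hy, rfl⟩
  obtain ⟨x', hx', hxx'⟩ := Set.mem_iUnion₂.mp (hsa hx)
  obtain ⟨y', hy', hyy'⟩ := Set.mem_iUnion₂.mp (htb hy)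
  refine Set.mem_iUnion₂.mpr ⟨x' + y', Set.add_mem_add hx' hy', ?_⟩
  calc dist (x + y) (x' + y') ≤ dist x x' + dist y y' := dist_add_add_le _ _ _ _
    _ < ε := by linarith [mem_ball.mp hxx', mem_ball.mp hyy']

theorem TotallyBounded.exists_finiteDimensional_infDist_lt {𝕜 E : Type*} [DivisionRing 𝕜]
    [SeminormedAddCommGroup E] [Module 𝕜 E] {S : Set E} (hS : TotallyBounded S) {ε : ℝ}
    (hε : 0 < ε) :
    ∃ F : Submodule 𝕜 E, FiniteDimensional 𝕜 F ∧ ∀ s ∈ S, infDist s (F : Set E) < ε := by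
  obtain ⟨t, ht, hSt⟩ := totallyBounded_iff.mp hS ε hε
  refine ⟨Submodule.span 𝕜 t, FiniteDimensional.span_of_finite 𝕜 ht, fun s hs => ?_⟩
  obtain ⟨y, hy, hsy⟩ := Set.mem_iUnion₂.mp (hSt hs)
  exact (infDist_le_dist_of_mem (Submodule.subset_span hy)).trans_lt hsy

section Perturbation

variable {𝕜 E : Type*} [NontriviallyNormedField 𝕜] [SeminormedAddCommGroup E] [NormedSpace 𝕜 E]
  (A : E →L[𝕜] E) (K : ℕ → E → E) {f : ℕ → E → E}

theorem totallyBounded_image_pow_sub_of_perturbation {n : ℕ}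
    (hK : ∀ j < n, ∀ B : Set E, IsBounded B → TotallyBounded (K (j + 1) '' B))
    (hf0 : ∀ x, f 0 x = x) (hfs : ∀ j x, f (j + 1) x = A (f j x) + K (j + 1) (f j x))
    {X₀ : Set E} (hX₀ : IsBounded X₀) :
    ∀ j ≤ n, TotallyBounded ((fun x => (A ^ j) x - f j x) '' X₀) := by
  intro j
  induction j with
  | zero =>
    intro _
    refine (Set.finite_singleton (0 : E)).totallyBounded.subset ?_
    rintro _ ⟨x, -, rfl⟩
    simp [hf0]
  | succ j ih =>
    intro hj
    have hd := ih (by omega)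
    have hf_bdd : IsBounded (f j '' X₀) := by
      refine (((A ^ j).lipschitz.isBounded_image hX₀).sub hd.isBounded).subset ?_
      rintro _ ⟨x, hx, rfl⟩
      exact ⟨_, ⟨x, hx, rfl⟩, _, ⟨x, hx, rfl⟩, sub_sub_cancel _ _⟩
    refine ((hd.image A.uniformContinuous).add (hK j (by omega) _ hf_bdd).neg).subset ?_
    rintro _ ⟨x, hx, rfl⟩
    refine ⟨A ((A ^ j) x - f j x), ⟨_, ⟨x, hx, rfl⟩, rfl⟩, -K (j + 1) (f j x),
      Set.neg_mem_neg.mpr ⟨f j x, ⟨x, hx, rfl⟩, rfl⟩, ?_⟩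
    have hpow : (A ^ (j + 1)) x = A ((A ^ j) x) := by rw [pow_succ']; rfl
    simp only [hfs, hpow, map_sub]
    abel

end Perturbation

theorem stmt_3_general (X : Type*) [NormedAddCommGroup X] [NormedSpace ℂ X]
    (A : X →L[ℂ] X) (n : ℕ) (K : ℕ → X → X)
    (hK : ∀ j, 1 ≤ j → j ≤ n → Continuous (K j) ∧
      ∀ B : Set X, Bornology.IsBounded B → IsCompact (closure (K j '' B)))
    (f : ℕ → X → X) (hf0 : ∀ x, f 0 x = x)
    (hfs : ∀ j x, f (j + 1) x = A (f j x) + K (j + 1) (f j x))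
    (X₀ : Set X) (hX₀ : Bornology.IsBounded X₀)
    (ε : ℝ) (hε : 0 < ε) :
    ∃ F : Submodule ℂ X, FiniteDimensional ℂ F ∧
      ∀ x ∈ X₀, ‖f n x‖ ≥ Metric.infDist ((A ^ n) x) (F : Set X) - ε := by
  have hK' : ∀ j < n, ∀ B : Set X, IsBounded B → TotallyBounded (K (j + 1) '' B) :=
    fun j hj B hB => totallyBounded_closure.mp
      ((hK (j + 1) (by omega) (by omega)).2 B hB).totallyBounded
  obtain ⟨F, hF, hdF⟩ := (totallyBounded_image_pow_sub_of_perturbation A K hK' hf0 hfs hX₀ n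
    le_rfl).exists_finiteDimensional_infDist_lt (𝕜 := ℂ) hε
  refine ⟨F, hF, fun x hx => ?_⟩
  have hd := hdF _ ⟨x, hx, rfl⟩
  have hdist : dist ((A ^ n) x) ((A ^ n) x - f n x) = ‖f n x‖ := by
    rw [dist_eq_norm, sub_sub_cancel]
  linarith [infDist_le_infDist_add_dist (s := (F : Set X)) (x := (A ^ n) x)
    (y := (A ^ n) x - f n x)]

/-- Lower bound for a finite piece of the trajectory: `‖f_n(x)‖ ≥ dist(Aⁿx, F) − ε`
for a suitable finite-dimensional subspace `F`, uniformly over a bounded set `X₀`. -/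
theorem stmt_3 (X : Type*) [NormedAddCommGroup X] [NormedSpace ℂ X] [CompleteSpace X]
    (A : X →L[ℂ] X) (n : ℕ) (K : ℕ → X → X)
    (hK : ∀ j, 1 ≤ j → j ≤ n → Continuous (K j) ∧
      ∀ B : Set X, Bornology.IsBounded B → IsCompact (closure (K j '' B)))
    (f : ℕ → X → X) (hf0 : ∀ x, f 0 x = x)
    (hfs : ∀ j x, f (j + 1) x = A (f j x) + K (j + 1) (f j x))
    (X₀ : Set X) (hX₀ : Bornology.IsBounded X₀)
    (ε : ℝ) (hε : 0 < ε) :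
    ∃ F : Submodule ℂ X, FiniteDimensional ℂ F ∧
      ∀ x ∈ X₀, ‖f n x‖ ≥ Metric.infDist ((A ^ n) x) (F : Set X) - ε :=
  stmt_3_general X A n K hK f hf0 hfs X₀ hX₀ ε hε
end

section
/- Let X be an infinite-dimensional Banach space, A a bounded linear operator on X, n a natural number, ε > 0, and F ⊆ X a finite-dimensional subspace. Then there exists a unit vector u ∈ X such that dist(A^n u, F) ≥ ((1 − ε)/2)·‖A^n‖_μ, where ‖T‖_μ = inf{‖T restricted to M‖ : M ⊆ X closed subspace of finite codimension}. -/
/-!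
Fix `δ > 0`. If every `Aⁿu` with `‖u‖ = 1` were within `c` of `F`, the nearby points of `F`
would lie in a compact ball of `F`; take a finite `δ`-net `y₁, …, yₖ` of that ball and norming
functionals `φᵢ` of the `yᵢ`. On the closed finite-codimensional subspace
`M = {x | φᵢ (Aⁿx) = 0 for all i}`, a vector `v = Aⁿu` satisfies `‖yᵢ‖ = |φᵢ (yᵢ - v)| ≤ ‖v - yᵢ‖`,
hence `‖v‖ ≤ 2‖v - yᵢ‖ ≤ 2(c + δ)`. So `‖Aⁿ‖_μ ≤ 2c`, which fails for `c = ((1 - ε)/2)‖Aⁿ‖_μ`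
unless `‖Aⁿ‖_μ = 0`, in which case the claim is trivial.
-/

/-- The μ-measure of non-compactness of a bounded operator: the infimum of the norms of its
restrictions to closed subspaces of finite codimension. -/
noncomputable def muNorm {X : Type*} [NormedAddCommGroup X] [NormedSpace ℂ X]
    (A : X →L[ℂ] X) : ℝ :=
  sInf {c : ℝ | ∃ M : Submodule ℂ X, IsClosed (M : Set X) ∧
    FiniteDimensional ℂ (X ⧸ M) ∧ c = ‖A.comp M.subtypeL‖}

open Metric

theorem Submodule.CoFG.comap {R M N : Type*} [Ring R] [IsNoetherianRing R]
    [AddCommGroup M] [Module R M] [AddCommGroup N] [Module R N]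
    {S : Submodule R N} (hS : S.CoFG) (f : M →ₗ[R] N) : (S.comap f).CoFG := by
  rw [← S.ker_mkQ, ← LinearMap.ker_comp]
  exact Submodule.CoFG.ker _

section Annihilator

variable {𝕜 E : Type*} [RCLike 𝕜] [NormedAddCommGroup E] [NormedSpace 𝕜 E]

theorem norm_le_two_mul_norm_sub_of_apply_eq_zero {φ : StrongDual 𝕜 E} {v y : E}
    (hφ : ‖φ‖ ≤ 1) (hφy : φ y = ‖y‖) (hφv : φ v = 0) : ‖v‖ ≤ 2 * ‖v - y‖ := by
  have hy : ‖y‖ ≤ ‖v - y‖ :=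
    calc ‖y‖ = ‖φ (y - v)‖ := by rw [map_sub, hφv, sub_zero, hφy, RCLike.norm_ofReal, abs_norm]
      _ ≤ ‖φ‖ * ‖y - v‖ := φ.le_opNorm _
      _ ≤ ‖v - y‖ := by rw [norm_sub_rev]; exact mul_le_of_le_one_left (norm_nonneg _) hφ
  calc ‖v‖ = ‖(v - y) + y‖ := by rw [sub_add_cancel]
    _ ≤ ‖v - y‖ + ‖y‖ := norm_add_le _ _
    _ ≤ 2 * ‖v - y‖ := by linarith

theorem IsCompact.exists_isClosed_cofg_norm_le {K : Set E} (hK : IsCompact K) {δ : ℝ}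
    (hδ : 0 < δ) : ∃ N : Submodule 𝕜 E, IsClosed (N : Set E) ∧ N.CoFG ∧
      ∀ v ∈ N, ∀ k ∈ K, ‖v‖ ≤ 2 * (‖v - k‖ + δ) := by
  obtain ⟨t, -, htfin, htcov⟩ := hK.finite_cover_balls hδ
  have := htfin.fintype
  choose φ hφ hφy using fun y : t => exists_dual_vector'' 𝕜 (y : E)
  let Φ : E →L[𝕜] (t → 𝕜) := ContinuousLinearMap.pi φ
  refine ⟨LinearMap.ker (Φ : E →ₗ[𝕜] (t → 𝕜)), Φ.isClosed_ker, Submodule.CoFG.ker _,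
    fun v hv k hk => ?_⟩
  obtain ⟨y, hyt, hky⟩ := Set.mem_iUnion₂.mp (htcov hk)
  have hφv : φ ⟨y, hyt⟩ v = 0 := congrFun (LinearMap.mem_ker.mp hv) ⟨y, hyt⟩
  calc ‖v‖ ≤ 2 * ‖v - y‖ := norm_le_two_mul_norm_sub_of_apply_eq_zero (hφ _) (hφy _) hφv
    _ ≤ 2 * (‖v - k‖ + δ) := by
      have : ‖k - y‖ < δ := by rw [← dist_eq_norm]; exact mem_ball.mp hky
      have := norm_sub_le_norm_sub_add_norm_sub v k y
      gcongr
      linarith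

end Annihilator

section MuNorm

variable {X : Type*} [NormedAddCommGroup X] [NormedSpace ℂ X]

theorem muNorm_nonneg (T : X →L[ℂ] X) : 0 ≤ muNorm T :=
  Real.sInf_nonneg <| by
    rintro c ⟨M, -, -, rfl⟩
    exact ContinuousLinearMap.opNorm_nonneg _

theorem muNorm_le_opNorm_comp_subtypeL (T : X →L[ℂ] X) {M : Submodule ℂ X} (hM : IsClosed (M : Set X))
    (hMfin : FiniteDimensional ℂ (X ⧸ M)) : muNorm T ≤ ‖T.comp M.subtypeL‖ := by
  refine csInf_le ⟨0, ?_⟩ ⟨M, hM, hMfin, rfl⟩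
  rintro c ⟨M, -, -, rfl⟩
  exact ContinuousLinearMap.opNorm_nonneg _

theorem muNorm_le_two_mul_add_of_forall_infDist_lt (T : X →L[ℂ] X)
    {F : Submodule ℂ X} [FiniteDimensional ℂ F] {c δ : ℝ} (hc0 : 0 ≤ c) (hδ : 0 < δ)
    (hc : ∀ u : X, ‖u‖ = 1 → infDist (T u) (F : Set X) < c) :
    muNorm T ≤ 2 * (c + δ) := by
  let R := ‖T‖ + c
  have hK : IsCompact (Subtype.val '' closedBall (0 : F) R) :=
    (isCompact_closedBall _ _).image continuous_subtype_val
  obtain ⟨N, hNclosed, hNcofg, hN⟩ := hK.exists_isClosed_cofg_norm_le (𝕜 := ℂ) hδ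
  refine (muNorm_le_opNorm_comp_subtypeL T (hNclosed.preimage T.continuous) (hNcofg.comap T.toLinearMap)).trans <|
    ContinuousLinearMap.opNorm_le_of_unit_norm (by positivity) fun x hx => ?_
  have hx' : ‖(x : X)‖ = 1 := hx
  obtain ⟨f, hfF, hf⟩ := (infDist_lt_iff ⟨0, F.zero_mem⟩).mp (hc x hx')
  rw [dist_eq_norm] at hf
  have hfR : f ∈ Subtype.val '' closedBall (0 : F) R := by
    refine ⟨⟨f, hfF⟩, mem_closedBall_zero_iff.mpr ?_, rfl⟩
    have hTx : ‖T x‖ ≤ ‖T‖ := by simpa [hx'] using T.le_opNorm x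
    have := norm_sub_norm_le f (T x)
    rw [norm_sub_rev] at this
    change ‖f‖ ≤ ‖T‖ + c
    linarith
  calc ‖T x‖ ≤ 2 * (‖T x - f‖ + δ) := hN _ x.2 f hfR
    _ ≤ 2 * (c + δ) := by gcongr

theorem muNorm_le_two_mul_of_forall_infDist_lt (T : X →L[ℂ] X)
    {F : Submodule ℂ X} [FiniteDimensional ℂ F] {c : ℝ} (hc0 : 0 ≤ c)
    (hc : ∀ u : X, ‖u‖ = 1 → infDist (T u) (F : Set X) < c) : muNorm T ≤ 2 * c :=
  le_of_forall_pos_le_add fun δ hδ => by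
    have := muNorm_le_two_mul_add_of_forall_infDist_lt T hc0 (half_pos hδ) hc
    linarith

end MuNorm

theorem stmt_4_general (X : Type*) [NormedAddCommGroup X] [NormedSpace ℂ X]
    (hX : ¬ FiniteDimensional ℂ X)
    (A : X →L[ℂ] X) (n : ℕ) (ε : ℝ) (hε : 0 < ε)
    (F : Submodule ℂ X) (hF : FiniteDimensional ℂ F) :
    ∃ u : X, ‖u‖ = 1 ∧
      Metric.infDist ((A ^ n) u) (F : Set X) ≥ (1 - ε) / 2 * muNorm (A ^ n) := by
  have : Nontrivial X := not_subsingleton_iff_nontrivial.mp fun _ => hX inferInstance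
  by_contra! h
  obtain ⟨x, hx⟩ := exists_ne (0 : X)
  have hc : 0 < (1 - ε) / 2 * muNorm (A ^ n) :=
    infDist_nonneg.trans_lt (h _ (norm_smul_inv_norm (𝕜 := ℂ) hx))
  have hμ := muNorm_le_two_mul_of_forall_infDist_lt (A ^ n) hc.le h
  have hμ0 : muNorm (A ^ n) ≤ 0 := by nlinarith
  rw [le_antisymm hμ0 (muNorm_nonneg _), mul_zero] at hc
  exact hc.false

/-- There is a unit vector `u` with `dist(Aⁿu, F) ≥ ((1 − ε)/2)·‖Aⁿ‖_μ` for any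
finite-dimensional subspace `F` of an infinite-dimensional Banach space. -/
theorem stmt_4 (X : Type*) [NormedAddCommGroup X] [NormedSpace ℂ X] [CompleteSpace X]
    (hX : ¬ FiniteDimensional ℂ X)
    (A : X →L[ℂ] X) (n : ℕ) (ε : ℝ) (hε : 0 < ε)
    (F : Submodule ℂ X) (hF : FiniteDimensional ℂ F) :
    ∃ u : X, ‖u‖ = 1 ∧
      Metric.infDist ((A ^ n) u) (F : Set X) ≥ (1 - ε) / 2 * muNorm (A ^ n) :=
  stmt_4_general X hX A n ε hε F hF
end

section
/- Let X be a Banach space, A a bounded linear operator on X with sup_{n∈ℕ} ‖A^n‖_μ = ∞ (in particular, this holds if the essential spectral radius r_e(A) > 1), let (K_n)_{n≥1} be compact maps on X, and define f_n(x) = (A + K_n)⋯(A + K_1)x. Then the set {x ∈ X : sup_{n∈ℕ} ‖f_n(x)‖ = ∞} is residual in X. -/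
open Metric Set Pointwise

section Dual

variable {𝕜 E : Type*} [RCLike 𝕜] [NormedAddCommGroup E] [NormedSpace 𝕜 E]

/-- Take norming functionals `g_c` of a finite `δ`-net of `D`: if `c` is the net point near the
`D`-part of `y` and `g_c y = 0`, then `‖c‖ = ‖g_c (c - y)‖ ≤ r + δ`. -/
lemma exists_finite_strongDual_norm_le_of_isCompact {D : Set E} (hD : IsCompact D)
    (r : ℝ) {δ : ℝ} (hδ : 0 < δ) :
    ∃ s : Set (StrongDual 𝕜 E), s.Finite ∧ ∀ y ∈ closedBall (0 : E) r + D,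
      (∀ g ∈ s, g y = 0) → ‖y‖ ≤ 2 * (r + δ) := by
  obtain ⟨t, ht, hDt⟩ := (totallyBounded_iff.mp hD.totallyBounded) δ hδ
  choose g hg_norm hg_apply using fun c : E => exists_dual_vector'' 𝕜 c
  refine ⟨g '' t, ht.image g, ?_⟩
  rintro _ ⟨u, hu, d, hd, rfl⟩ hker
  obtain ⟨c, hct, hdc⟩ := mem_iUnion₂.mp (hDt hd)
  rw [mem_closedBall_zero_iff] at hu
  rw [mem_ball, dist_eq_norm] at hdc
  have hcy : ‖c - (u + d)‖ ≤ r + δ := by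
    calc ‖c - (u + d)‖ = ‖(c - d) - u‖ := by congr 1; abel
      _ ≤ ‖c - d‖ + ‖u‖ := norm_sub_le _ _
      _ ≤ r + δ := by rw [norm_sub_rev]; linarith
  have hc : ‖c‖ ≤ r + δ := by
    have hgy : g c (u + d) = 0 := hker _ (mem_image_of_mem g hct)
    calc ‖c‖ = ‖g c (c - (u + d))‖ := by
          rw [map_sub, hgy, sub_zero, hg_apply, RCLike.norm_coe_norm]
      _ ≤ 1 * ‖c - (u + d)‖ := (g c).le_of_opNorm_le (hg_norm c) _
      _ ≤ r + δ := by rw [one_mul]; exact hcy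
  calc ‖u + d‖ = ‖c - (c - (u + d))‖ := by rw [sub_sub_cancel]
    _ ≤ ‖c‖ + ‖c - (u + d)‖ := norm_sub_le _ _
    _ ≤ 2 * (r + δ) := by linarith

end Dual

section MuNorm

variable {X : Type*} [NormedAddCommGroup X] [NormedSpace ℂ X]

lemma muNorm_le (T : X →L[ℂ] X) (M : Submodule ℂ X) (hM : IsClosed (M : Set X))
    [FiniteDimensional ℂ (X ⧸ M)] : muNorm T ≤ ‖T.comp M.subtypeL‖ := by
  refine csInf_le ⟨0, ?_⟩ ⟨M, hM, inferInstance, rfl⟩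
  rintro _ ⟨N, -, -, rfl⟩
  exact norm_nonneg (T.comp N.subtypeL)

lemma muNorm_le_of_norm_le_on_ker {F : Type*} [AddCommGroup F] [Module ℂ F] [TopologicalSpace F]
    [T1Space F] [FiniteDimensional ℂ F] (T : X →L[ℂ] X) (Φ : X →L[ℂ] F) {ρ C : ℝ} (hρ : 0 < ρ)
    (hT : ∀ x, Φ x = 0 → ‖x‖ ≤ ρ → ‖T x‖ ≤ C) :
    muNorm T ≤ C / ρ := by
  set M := LinearMap.ker (Φ : X →ₗ[ℂ] F)
  have hM : FiniteDimensional ℂ (X ⧸ M) :=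
    Module.Finite.equiv (Φ : X →ₗ[ℂ] F).quotKerEquivRange.symm
  have hC : 0 ≤ C := by simpa using hT 0 (map_zero Φ) (by simpa using hρ.le)
  have hnorm : ‖T.comp M.subtypeL‖ ≤ C / ρ := by
    refine ContinuousLinearMap.opNorm_le_of_unit_norm (div_nonneg hC hρ.le) fun x hx => ?_
    have hρx : ‖((ρ : ℂ) • x : M)‖ = ρ := by
      rw [norm_smul, hx, mul_one, Complex.norm_real, Real.norm_of_nonneg hρ.le]
    have := hT _ ((ρ : ℂ) • x).2 (by simpa using hρx.le)
    rw [le_div_iff₀ hρ]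
    simpa [norm_smul, Complex.norm_real, abs_of_pos hρ, mul_comm] using this
  exact (muNorm_le T M Φ.isClosed_ker).trans hnorm

lemma muNorm_le_of_mapsTo_closedBall_add (T : X →L[ℂ] X) {D : Set X} (hD : IsCompact D)
    {ρ r : ℝ} (hρ : 0 < ρ) (hT : MapsTo T (closedBall 0 ρ) (closedBall 0 r + D)) :
    muNorm T ≤ 2 * (r + 1) / ρ := by
  obtain ⟨s, hs_fin, hs⟩ := exists_finite_strongDual_norm_le_of_isCompact (𝕜 := ℂ) hD r one_pos
  have := hs_fin.to_subtype
  refine muNorm_le_of_norm_le_on_ker T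
    (ContinuousLinearMap.pi fun g : s => (g : StrongDual ℂ X).comp T) hρ
    fun x hx hxρ => hs _ (hT (mem_closedBall_zero_iff.mpr hxρ)) fun g hg => ?_
  simpa using congrFun hx ⟨g, hg⟩

end MuNorm

section Orbits

variable {𝕜 X : Type*} [NormedField 𝕜] [NormedAddCommGroup X] [NormedSpace 𝕜 X]
  {A : X →L[𝕜] X} {K : ℕ → X → X} {f : ℕ → X → X}

lemma continuous_orbit (hK : ∀ j, Continuous (K (j + 1))) (hf0 : ∀ x, f 0 x = x)
    (hfs : ∀ j x, f (j + 1) x = A (f j x) + K (j + 1) (f j x)) (n : ℕ) : Continuous (f n) := by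
  induction n with
  | zero => rw [funext hf0]; exact continuous_id
  | succ n ih => rw [funext (hfs n)]; exact (A.continuous.comp ih).add ((hK n).comp ih)

lemma exists_isCompact_orbit_sub_pow_mem
    (hK : ∀ j B, Bornology.IsBounded B → IsCompact (closure (K (j + 1) '' B)))
    (hf0 : ∀ x, f 0 x = x) (hfs : ∀ j x, f (j + 1) x = A (f j x) + K (j + 1) (f j x))
    {S : Set X} (hS : ∀ n, Bornology.IsBounded (f n '' S)) (n : ℕ) :
    ∃ C, IsCompact C ∧ ∀ y ∈ S, f n y - (A ^ n) y ∈ C := by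
  induction n with
  | zero => exact ⟨{0}, isCompact_singleton, fun y _ => by simp [hf0]⟩
  | succ n ih =>
    obtain ⟨C, hC, hCS⟩ := ih
    refine ⟨A '' C + closure (K (n + 1) '' (f n '' S)), (hC.image A.continuous).add (hK n _ (hS n)),
      fun y hy => ?_⟩
    have hstep : f (n + 1) y - (A ^ (n + 1)) y = A (f n y - (A ^ n) y) + K (n + 1) (f n y) := by
      rw [hfs n y, pow_succ', mul_apply_eq_comp, map_sub]
      abel
    rw [hstep]
    exact add_mem_add (mem_image_of_mem A (hCS y hy))
      (subset_closure (mem_image_of_mem _ (mem_image_of_mem _ hy)))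

end Orbits

lemma bddAbove_muNorm_pow_of_bounded_on_closedBall {X : Type*} [NormedAddCommGroup X]
    [NormedSpace ℂ X] {A : X →L[ℂ] X} {K : ℕ → X → X} {f : ℕ → X → X}
    (hK : ∀ j B, Bornology.IsBounded B → IsCompact (closure (K (j + 1) '' B)))
    (hf0 : ∀ x, f 0 x = x) (hfs : ∀ j x, f (j + 1) x = A (f j x) + K (j + 1) (f j x))
    {x₀ : X} {ρ R : ℝ} (hρ : 0 < ρ) (hR : ∀ n, ∀ y ∈ closedBall x₀ ρ, ‖f n y‖ ≤ R) :
    BddAbove (range fun n => muNorm (A ^ n)) := by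
  have hS : ∀ n, Bornology.IsBounded (f n '' closedBall x₀ ρ) := fun n =>
    isBounded_iff_forall_norm_le.mpr ⟨R, forall_mem_image.mpr (hR n)⟩
  refine ⟨2 * (2 * R + 1) / ρ, forall_mem_range.mpr fun n => ?_⟩
  obtain ⟨C, hC, hCS⟩ := exists_isCompact_orbit_sub_pow_mem hK hf0 hfs hS n
  refine muNorm_le_of_mapsTo_closedBall_add _ (hC.add hC.neg) hρ fun h hh => ?_
  have hx₀ : x₀ ∈ closedBall x₀ ρ := mem_closedBall_self hρ.le
  have hxh : x₀ + h ∈ closedBall x₀ ρ := by simpa [dist_eq_norm] using hh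
  have hdiff : f n (x₀ + h) - f n x₀ ∈ closedBall 0 (2 * R) :=
    mem_closedBall_zero_iff.mpr ((norm_sub_le _ _).trans (by linarith [hR n _ hxh, hR n _ hx₀]))
  -- `Aⁿ h` is the difference of two orbit values plus the difference of two remainders
  convert add_mem_add hdiff (add_mem_add (hCS _ hx₀) (neg_mem_neg.mpr (hCS _ hxh))) using 1
  rw [map_add]
  abel

lemma setOf_not_bddAbove_mem_residual {X ι : Type*} [TopologicalSpace X] {g : ι → X → ℝ}
    (hg : ∀ i, Continuous (g i)) (h : ∀ m : ℕ, interior {x | ∀ i, g i x ≤ m} = ∅) :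
    {x | ¬ BddAbove (range fun i => g i x)} ∈ residual X := by
  have hclosed (m : ℕ) : IsClosed {x | ∀ i, g i x ≤ m} := by
    simp only [ofPred_forall]
    exact isClosed_iInter fun i => isClosed_le (hg i) continuous_const
  have hmeagre : IsMeagre (⋃ m : ℕ, {x | ∀ i, g i x ≤ m}) :=
    isMeagre_iUnion fun m => ((hclosed m).isNowhereDense_iff.mpr (h m)).isMeagre
  refine Filter.mem_of_superset hmeagre ?_
  rintro x hx ⟨b, hb⟩
  obtain ⟨m, hm⟩ := exists_nat_ge b
  exact hx (mem_iUnion.mpr ⟨m, fun i => (hb (mem_range_self i)).trans hm⟩)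

theorem stmt_7_general (X : Type*) [NormedAddCommGroup X] [NormedSpace ℂ X]
    (A : X →L[ℂ] X)
    (hA : ¬ BddAbove (Set.range fun n : ℕ => muNorm (A ^ n)))
    (K : ℕ → X → X)
    (hK : ∀ j, 1 ≤ j → Continuous (K j) ∧
      ∀ B : Set X, Bornology.IsBounded B → IsCompact (closure (K j '' B)))
    (f : ℕ → X → X) (hf0 : ∀ x, f 0 x = x)
    (hfs : ∀ j x, f (j + 1) x = A (f j x) + K (j + 1) (f j x)) :
    {x : X | ¬ BddAbove (Set.range fun n : ℕ => ‖f n x‖)} ∈ residual X := by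
  have hK' (j : ℕ) := hK (j + 1) (Nat.le_add_left 1 j)
  refine setOf_not_bddAbove_mem_residual
    (fun n => (continuous_orbit (fun j => (hK' j).1) hf0 hfs n).norm) fun m => ?_
  refine eq_empty_of_forall_notMem fun x₀ hx₀ => hA ?_
  obtain ⟨ρ, hρ, hball⟩ :=
    nhds_basis_closedBall.mem_iff.mp (mem_interior_iff_mem_nhds.mp hx₀)
  exact bddAbove_muNorm_pow_of_bounded_on_closedBall (fun j => (hK' j).2) hf0 hfs hρ
    fun n y hy => hball hy n

/-- If `sup_n ‖Aⁿ‖_μ = ∞`, then the set of initial data with unbounded nonlinear orbit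
is residual. -/
theorem stmt_7 (X : Type*) [NormedAddCommGroup X] [NormedSpace ℂ X] [CompleteSpace X]
    (hX : ¬ FiniteDimensional ℂ X)
    (A : X →L[ℂ] X)
    (hA : ¬ BddAbove (Set.range fun n : ℕ => muNorm (A ^ n)))
    (K : ℕ → X → X)
    (hK : ∀ j, 1 ≤ j → Continuous (K j) ∧
      ∀ B : Set X, Bornology.IsBounded B → IsCompact (closure (K j '' B)))
    (f : ℕ → X → X) (hf0 : ∀ x, f 0 x = x)
    (hfs : ∀ j x, f (j + 1) x = A (f j x) + K (j + 1) (f j x)) :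
    {x : X | ¬ BddAbove (Set.range fun n : ℕ => ‖f n x‖)} ∈ residual X :=
  stmt_7_general X A hA K hK f hf0 hfs
end

section
/- Let (T(t))_{t≥0} be a C₀-semigroup on a Banach space X, K : [0,∞)×X → X collectively compact and separately continuous, B ⊆ X bounded, and suppose for each x₀ ∈ B there is a global mild solution x(·, x₀) of x(t) = T(t)x₀ + ∫₀ᵗ T(t−s)K(s, x(s))ds such that {x(t,x₀) : 0 ≤ t ≤ t₀, x₀ ∈ B} is bounded for every t₀ > 0. Then for fixed t₀ > 0 the set C = { ∫₀ᵗ T(t−s)K(s, x(s,x₀)) ds : x₀ ∈ B, t ∈ [0, t₀] } is precompact in X. -/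
/-!
On `[0, t₀]` the semigroup is uniformly bounded (Banach–Steinhaus), hence jointly continuous in
`(t, y)`, so the integrand `T (t - s) (K s (x x₀ s))` ranges in the compact set `E` obtained by
applying `T [0, t₀]` to the closure of `K ([0, t₀] × orbits)`. An integral over `[0, t]` is `t`
times an average, and averages lie in the closed convex hull `S` of `E ∪ {0}`, compact by Mazur's
theorem; so every Duhamel integral lies in the compact set `[0, t₀] • S`.
-/

open MeasureTheory Set
open scoped NNReal Pointwise

section StronglyContinuous

variable {α 𝕜 E F : Type*} [TopologicalSpace α] [NontriviallyNormedField 𝕜]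
  [NormedAddCommGroup E] [NormedSpace 𝕜 E] [CompleteSpace E]
  [NormedAddCommGroup F] [NormedSpace 𝕜 F]
  {T : α → E →L[𝕜] F} {s : Set α}

theorem IsCompact.exists_nnnorm_le_of_continuousOn_apply (hs : IsCompact s)
    (hT : ∀ x, ContinuousOn (fun t ↦ T t x) s) : ∃ C : ℝ≥0, ∀ t ∈ s, ‖T t‖₊ ≤ C := by
  obtain ⟨C, hC⟩ := banach_steinhaus (g := fun t : s ↦ T t) fun x ↦
    (hs.exists_bound_of_continuousOn (hT x)).imp fun _ h t ↦ h t t.2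
  exact ⟨C.toNNReal, fun t ht ↦ NNReal.coe_le_coe.1 <| (hC ⟨t, ht⟩).trans C.le_coe_toNNReal⟩

theorem IsCompact.continuousOn_apply_prod (hs : IsCompact s)
    (hT : ∀ x, ContinuousOn (fun t ↦ T t x) s) :
    ContinuousOn (fun p : α × E ↦ T p.1 p.2) (s ×ˢ univ) := by
  obtain ⟨C, hC⟩ := hs.exists_nnnorm_le_of_continuousOn_apply hT
  exact continuousOn_prod_of_continuousOn_lipschitzOnWith' _ C
    (fun t ht ↦ ((T t).lipschitz.weaken (hC t ht)).lipschitzOnWith) fun x _ ↦ hT x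

theorem IsCompact.image2_apply (hs : IsCompact s) (hT : ∀ x, ContinuousOn (fun t ↦ T t x) s)
    {D : Set E} (hD : IsCompact D) : IsCompact (image2 (fun t x ↦ T t x) s D) := by
  rw [← image_prod]
  exact (hs.prod hD).image_of_continuousOn
    ((hs.continuousOn_apply_prod hT).mono (prod_mono_right (subset_univ D)))

end StronglyContinuous

theorem IsCompact.closedConvexHull {E : Type*} [NormedAddCommGroup E] [NormedSpace ℝ E]
    [CompleteSpace E] {K : Set E} (hK : IsCompact K) : IsCompact (closedConvexHull ℝ K) := by
  rw [closedConvexHull_eq_closure_convexHull]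
  exact (totallyBounded_convexHull.2 hK.totallyBounded).closure.isCompact_of_isClosed
    isClosed_closure

section ConvexIntegral

variable {α E : Type*} [MeasurableSpace α] [NormedAddCommGroup E] [NormedSpace ℝ E] [CompleteSpace E]
  {μ : Measure α} {s : Set α} {S : Set E} {f : α → E}

theorem Convex.setIntegral_mem_smul (hS : Convex ℝ S) (hSc : IsClosed S) (h0 : (0 : E) ∈ S)
    (hμ : μ s ≠ ⊤) (hf : ∀ᵐ x ∂μ.restrict s, f x ∈ S) :
    ∫ x in s, f x ∂μ ∈ μ.real s • S := by
  have h0' : (0 : E) ∈ μ.real s • S := by simpa using smul_mem_smul_set (a := μ.real s) h0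
  by_cases hfi : IntegrableOn f s μ
  swap
  · rwa [integral_undef hfi]
  rcases eq_or_ne (μ s) 0 with hμ0 | hμ0
  · rwa [Measure.restrict_eq_zero.2 hμ0, integral_zero_measure]
  have hμ0' : μ.real s ≠ 0 := ENNReal.toReal_ne_zero.2 ⟨hμ0, hμ⟩
  rw [← smul_inv_smul₀ hμ0' (∫ x in s, f x ∂μ), ← setAverage_eq]
  exact smul_mem_smul_set (hS.set_average_mem hSc hμ0 hμ hf hfi)

theorem Convex.intervalIntegral_mem_smul {f : ℝ → E} {a b : ℝ} (hab : a ≤ b) (hS : Convex ℝ S)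
    (hSc : IsClosed S) (h0 : (0 : E) ∈ S) (hf : ∀ t ∈ Ioc a b, f t ∈ S) :
    ∫ t in a..b, f t ∈ (b - a) • S := by
  rw [intervalIntegral.integral_of_le hab, ← Real.volume_real_Ioc_of_le hab]
  exact hS.setIntegral_mem_smul hSc h0 measure_Ioc_lt_top.ne
    ((ae_restrict_mem measurableSet_Ioc).mono hf)

end ConvexIntegral

theorem stmt_12_general (X : Type*) [NormedAddCommGroup X] [NormedSpace ℂ X] [CompleteSpace X]
    (T : ℝ → X →L[ℂ] X)
    (hTcont : ∀ x : X, ContinuousOn (fun t => T t x) (Set.Ici 0))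
    (K : ℝ → X → X)
    (hcc : ∀ t₁ > (0:ℝ), ∀ B' : Set X, Bornology.IsBounded B' →
      IsCompact (closure (Set.image2 K (Set.Icc 0 t₁) B')))
    (B : Set X)
    (x : X → ℝ → X)
    (hbdd : ∀ t₁ > (0:ℝ),
      Bornology.IsBounded {z : X | ∃ x₀ ∈ B, ∃ t ∈ Set.Icc (0:ℝ) t₁, z = x x₀ t})
    (t₀ : ℝ) (ht₀ : 0 < t₀) :
    IsCompact (closure {z : X | ∃ x₀ ∈ B, ∃ t ∈ Set.Icc (0:ℝ) t₀,
      z = ∫ s in (0:ℝ)..t, (T (t - s)) (K s (x x₀ s))}) := by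
  set D := closure (image2 K (Icc 0 t₀) {z | ∃ x₀ ∈ B, ∃ t ∈ Icc 0 t₀, z = x x₀ t})
  have hD : IsCompact D := hcc t₀ ht₀ _ (hbdd t₀ ht₀)
  set S := closedConvexHull ℝ (insert 0 (image2 (fun r y ↦ T r y) (Icc 0 t₀) D))
  have hS : IsCompact S := (isCompact_Icc.image2_apply
    (fun y ↦ (hTcont y).mono Icc_subset_Ici_self) hD |>.insert 0).closedConvexHull
  refine ((isCompact_Icc : IsCompact (Icc (0 : ℝ) t₀)).smul_set hS).closure_of_subset ?_
  rintro _ ⟨x₀, hx₀, t, ht, rfl⟩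
  have hmem : ∀ s ∈ Ioc 0 t, T (t - s) (K s (x x₀ s)) ∈ S := fun s hs ↦
    subset_closedConvexHull <| mem_insert_of_mem _ <| mem_image2_of_mem
      ⟨by linarith [hs.2], by linarith [hs.1, ht.2]⟩
      (subset_closure (mem_image2_of_mem ⟨hs.1.le, hs.2.trans ht.2⟩
        ⟨x₀, hx₀, s, ⟨hs.1.le, hs.2.trans ht.2⟩, rfl⟩))
  refine smul_set_subset_smul ht ?_
  simpa only [sub_zero] using convex_closedConvexHull.intervalIntegral_mem_smul ht.1
    isClosed_closedConvexHull (subset_closedConvexHull (mem_insert 0 _)) hmem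

/-- Precompactness of the set of Duhamel integrals of mild solutions with initial data in a
bounded set `B`, over a compact time interval `[0, t₀]`. -/
theorem stmt_12 (X : Type*) [NormedAddCommGroup X] [NormedSpace ℂ X] [CompleteSpace X]
    (T : ℝ → X →L[ℂ] X) (hT0 : T 0 = 1)
    (hTadd : ∀ s t : ℝ, 0 ≤ s → 0 ≤ t → T (s + t) = (T s).comp (T t))
    (hTcont : ∀ x : X, ContinuousOn (fun t => T t x) (Set.Ici 0))
    (K : ℝ → X → X)
    (hKt : ∀ x : X, ContinuousOn (fun s => K s x) (Set.Ici 0))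
    (hKx : ∀ s : ℝ, 0 ≤ s → Continuous (K s))
    (hcc : ∀ t₁ > (0:ℝ), ∀ B' : Set X, Bornology.IsBounded B' →
      IsCompact (closure (Set.image2 K (Set.Icc 0 t₁) B')))
    (B : Set X) (hB : Bornology.IsBounded B)
    (x : X → ℝ → X)
    (hxc : ∀ x₀ ∈ B, ContinuousOn (x x₀) (Set.Ici 0))
    (hmild : ∀ x₀ ∈ B, ∀ t : ℝ, 0 ≤ t →
      x x₀ t = T t x₀ + ∫ s in (0:ℝ)..t, (T (t - s)) (K s (x x₀ s)))
    (hbdd : ∀ t₁ > (0:ℝ),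
      Bornology.IsBounded {z : X | ∃ x₀ ∈ B, ∃ t ∈ Set.Icc (0:ℝ) t₁, z = x x₀ t})
    (t₀ : ℝ) (ht₀ : 0 < t₀) :
    IsCompact (closure {z : X | ∃ x₀ ∈ B, ∃ t ∈ Set.Icc (0:ℝ) t₀,
      z = ∫ s in (0:ℝ)..t, (T (t - s)) (K s (x x₀ s))}) :=
  stmt_12_general X T hTcont K hcc B x hbdd t₀ ht₀
end

section
/- Under the assumptions of the previous statement (C₀-semigroup T, collectively compact separately continuous K, bounded B with uniformly bounded solutions on compact time intervals), for each t₀ > 0 there exists a compact set C₀ ⊆ X such that x(t, x₀) ∈ T(t)x₀ + C₀ for all x₀ ∈ B and all t ∈ [0, t₀]. -/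
/-!
Over `[0, t₀]` the solution values form a bounded set, so collective compactness puts every
value `K s (x x₀ s)` in one compact set `C`. By Banach–Steinhaus the semigroup is uniformly
bounded on `[0, t₀]`, hence `(τ, y) ↦ T τ y` is jointly continuous and maps `[0, t₀] × C` onto
a compact set `D`. The deviation `x(t) - T(t)x₀` is the integral over `[0, t]` of a function with
values in `D`, i.e. `t` times an average of such values, so it lies in `[0, t₀] • K₀` with `K₀`
the closed convex hull of `D ∪ {0}`, which is compact because the space is complete.
-/

open MeasureTheory Set Filter Topology Pointwise

section StronglyContinuous

variable {α 𝕜 E F : Type*} [TopologicalSpace α] [NontriviallyNormedField 𝕜]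
  [NormedAddCommGroup E] [NormedSpace 𝕜 E] [NormedAddCommGroup F] [NormedSpace 𝕜 F]
  {T : α → E →L[𝕜] F} {s : Set α}

theorem IsCompact.exists_norm_le_of_continuousOn_apply [CompleteSpace E] (hs : IsCompact s)
    (hT : ∀ y, ContinuousOn (fun a => T a y) s) : ∃ M, ∀ a ∈ s, ‖T a‖ ≤ M := by
  obtain ⟨M, hM⟩ := banach_steinhaus (g := fun a : s => T a) fun y =>
    (hs.exists_bound_of_continuousOn (hT y)).imp fun _ hC a => hC a a.2
  exact ⟨M, fun a ha => hM ⟨a, ha⟩⟩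

theorem continuousOn_apply_of_norm_le {M : ℝ} (hT : ∀ y, ContinuousOn (fun a => T a y) s)
    (hM : ∀ a ∈ s, ‖T a‖ ≤ M) : ContinuousOn (fun p : α × E => T p.1 p.2) (s ×ˢ univ) := by
  rintro ⟨a₀, y₀⟩ ⟨ha₀, -⟩
  have hsmall : Tendsto (fun p : α × E => T p.1 (p.2 - y₀)) (𝓝[s ×ˢ univ] (a₀, y₀)) (𝓝 0) := by
    refine squeeze_zero_norm' (a := fun p : α × E => M * ‖p.2 - y₀‖) ?_ ?_
    · filter_upwards [self_mem_nhdsWithin] with p hp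
      exact (T p.1).le_of_opNorm_le (hM p.1 hp.1) _
    · have : Tendsto (fun p : α × E => M * ‖p.2 - y₀‖) (𝓝 (a₀, y₀)) (𝓝 (M * ‖y₀ - y₀‖)) :=
        (continuous_const.mul (continuous_snd.sub continuous_const).norm).tendsto _
      simpa using this.mono_left nhdsWithin_le_nhds
  have hbase : ContinuousWithinAt (fun p : α × E => T p.1 y₀) (s ×ˢ univ) (a₀, y₀) :=
    ContinuousWithinAt.comp (g := fun a => T a y₀) (x := (a₀, y₀)) (hT y₀ a₀ ha₀)
      continuousWithinAt_fst fun _ hp => hp.1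
  simpa [ContinuousWithinAt] using hsmall.add hbase

theorem IsCompact.image_apply_prod [CompleteSpace E] {C : Set E} (hs : IsCompact s)
    (hC : IsCompact C) (hT : ∀ y, ContinuousOn (fun a => T a y) s) :
    IsCompact ((fun p : α × E => T p.1 p.2) '' (s ×ˢ C)) := by
  obtain ⟨M, hM⟩ := hs.exists_norm_le_of_continuousOn_apply hT
  exact (hs.prod hC).image_of_continuousOn
    ((continuousOn_apply_of_norm_le hT hM).mono (prod_mono subset_rfl (subset_univ C)))

end StronglyContinuous

theorem IsCompact.closure_convexHull {E : Type*} [AddCommGroup E] [Module ℝ E] [UniformSpace E]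
    [IsUniformAddGroup E] [LocallyConvexSpace ℝ E] [ContinuousSMul ℝ E] [CompleteSpace E]
    {s : Set E} (hs : IsCompact s) : IsCompact (closure (convexHull ℝ s)) :=
  hs.totallyBounded.convexHull.closure.isCompact_of_isClosed isClosed_closure

theorem intervalIntegral.integral_mem_smul_closure_convexHull {E : Type*} [NormedAddCommGroup E]
    [NormedSpace ℝ E] [CompleteSpace E] {f : ℝ → E} {a b : ℝ} {S : Set E} (hab : a ≤ b) (h0 : (0 : E) ∈ S)
    (hf : ∀ t ∈ Ioc a b, f t ∈ S) : ∫ t in a..b, f t ∈ (b - a) • closure (convexHull ℝ S) := by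
  have h0J : (0 : E) ∈ closure (convexHull ℝ S) := subset_closure (subset_convexHull ℝ S h0)
  rcases hab.eq_or_lt with rfl | hab
  · simpa using smul_mem_smul_set (a := (0 : ℝ)) h0J
  by_cases hint : IntervalIntegrable f volume a b
  · have hμ0 : volume (Ioc a b) ≠ 0 := by simp [Real.volume_Ioc, hab]
    have hμtop : volume (Ioc a b) ≠ ⊤ := by simp [Real.volume_Ioc]
    have havg : ⨍ t in Ioc a b, f t ∈ closure (convexHull ℝ S) :=
      (convex_convexHull ℝ S).set_average_mem_closure hμ0 hμtop
        ((ae_restrict_mem measurableSet_Ioc).mono fun t ht => subset_convexHull ℝ S (hf t ht))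
        ((intervalIntegrable_iff_integrableOn_Ioc_of_le hab.le).1 hint)
    convert smul_mem_smul_set (a := b - a) havg using 1
    rw [intervalIntegral.integral_of_le hab.le, ← measure_smul_setAverage f hμtop]
    simp [hab.le]
  · rw [intervalIntegral.integral_undef hint]
    simpa using smul_mem_smul_set (a := b - a) h0J

theorem stmt_13_general (X : Type*) [NormedAddCommGroup X] [NormedSpace ℂ X] [CompleteSpace X]
    (T : ℝ → X →L[ℂ] X)
    (hTcont : ∀ x : X, ContinuousOn (fun t => T t x) (Set.Ici 0))
    (K : ℝ → X → X)
    (hcc : ∀ t₁ > (0:ℝ), ∀ B' : Set X, Bornology.IsBounded B' →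
      IsCompact (closure (Set.image2 K (Set.Icc 0 t₁) B')))
    (B : Set X)
    (x : X → ℝ → X)
    (hmild : ∀ x₀ ∈ B, ∀ t : ℝ, 0 ≤ t →
      x x₀ t = T t x₀ + ∫ s in (0:ℝ)..t, (T (t - s)) (K s (x x₀ s)))
    (hbdd : ∀ t₁ > (0:ℝ),
      Bornology.IsBounded {z : X | ∃ x₀ ∈ B, ∃ t ∈ Set.Icc (0:ℝ) t₁, z = x x₀ t})
    (t₀ : ℝ) (ht₀ : 0 < t₀) :
    ∃ C₀ : Set X, IsCompact C₀ ∧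
      ∀ x₀ ∈ B, ∀ t ∈ Set.Icc (0:ℝ) t₀, x x₀ t - (T t) x₀ ∈ C₀ := by
  set V : Set X := {z | ∃ x₀ ∈ B, ∃ t ∈ Icc (0:ℝ) t₀, z = x x₀ t}
  set D : Set X := (fun p : ℝ × X => T p.1 p.2) '' (Icc 0 t₀ ×ˢ closure (image2 K (Icc 0 t₀) V))
  have hD : IsCompact D := isCompact_Icc.image_apply_prod (hcc t₀ ht₀ V (hbdd t₀ ht₀))
    fun y => (hTcont y).mono Icc_subset_Ici_self
  refine ⟨Icc 0 t₀ • closure (convexHull ℝ (insert 0 D)),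
    isCompact_Icc.smul_set (hD.insert 0).closure_convexHull, ?_⟩
  rintro x₀ hx₀ t ⟨ht0, htt₀⟩
  have hvalues : ∀ s ∈ Ioc 0 t, T (t - s) (K s (x x₀ s)) ∈ insert 0 D := fun s ⟨hs0, hst⟩ =>
    have hs : s ∈ Icc 0 t₀ := ⟨hs0.le, hst.trans htt₀⟩
    mem_insert_of_mem _ ⟨(t - s, K s (x x₀ s)), ⟨⟨by linarith, by linarith⟩,
      subset_closure (mem_image2_of_mem hs ⟨x₀, hx₀, s, hs, rfl⟩)⟩, rfl⟩
  obtain ⟨y, hy, hxy⟩ :=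
    intervalIntegral.integral_mem_smul_closure_convexHull ht0 (mem_insert 0 D) hvalues
  rw [hmild x₀ hx₀ t ht0, add_sub_cancel_left, ← hxy, sub_zero]
  exact smul_mem_smul ⟨ht0, htt₀⟩ hy

/-- The mild solutions deviate from the linear evolution `T(t)x₀` only within a fixed
compact set `C₀`, uniformly over `x₀ ∈ B` and `t ∈ [0, t₀]`. -/
theorem stmt_13 (X : Type*) [NormedAddCommGroup X] [NormedSpace ℂ X] [CompleteSpace X]
    (T : ℝ → X →L[ℂ] X) (hT0 : T 0 = 1)
    (hTadd : ∀ s t : ℝ, 0 ≤ s → 0 ≤ t → T (s + t) = (T s).comp (T t))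
    (hTcont : ∀ x : X, ContinuousOn (fun t => T t x) (Set.Ici 0))
    (K : ℝ → X → X)
    (hKt : ∀ x : X, ContinuousOn (fun s => K s x) (Set.Ici 0))
    (hKx : ∀ s : ℝ, 0 ≤ s → Continuous (K s))
    (hcc : ∀ t₁ > (0:ℝ), ∀ B' : Set X, Bornology.IsBounded B' →
      IsCompact (closure (Set.image2 K (Set.Icc 0 t₁) B')))
    (B : Set X) (hB : Bornology.IsBounded B)
    (x : X → ℝ → X)
    (hxc : ∀ x₀ ∈ B, ContinuousOn (x x₀) (Set.Ici 0))
    (hmild : ∀ x₀ ∈ B, ∀ t : ℝ, 0 ≤ t →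
      x x₀ t = T t x₀ + ∫ s in (0:ℝ)..t, (T (t - s)) (K s (x x₀ s)))
    (hbdd : ∀ t₁ > (0:ℝ),
      Bornology.IsBounded {z : X | ∃ x₀ ∈ B, ∃ t ∈ Set.Icc (0:ℝ) t₁, z = x x₀ t})
    (t₀ : ℝ) (ht₀ : 0 < t₀) :
    ∃ C₀ : Set X, IsCompact C₀ ∧
      ∀ x₀ ∈ B, ∀ t ∈ Set.Icc (0:ℝ) t₀, x x₀ t - (T t) x₀ ∈ C₀ :=
  stmt_13_general X T hTcont K hcc B x hmild hbdd t₀ ht₀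
end

section
/- Let A generate a C₀-semigroup (T(t))_{t≥0} on a Banach space X and suppose there are μ_n = ω + i b_n with |b_n| → ∞ and unit vectors u_n ∈ D(A) with ‖(μ_n − A)u_n‖ → 0. Then ⟨u_n, y*⟩ → 0 for every y* ∈ D(A*). In particular, if X is reflexive, u_n → 0 weakly. -/
/-- Approximate eigenvectors of the generator `A` along a vertical line `ω + i b_n` with
`|b_n| → ∞` tend weakly to zero against functionals in the domain of the adjoint `A*`. -/
theorem stmt_15 (X : Type*) [NormedAddCommGroup X] [NormedSpace ℂ X] [CompleteSpace X]
    (T : ℝ → X →L[ℂ] X) (hT0 : T 0 = 1)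
    (hTadd : ∀ s t : ℝ, 0 ≤ s → 0 ≤ t → T (s + t) = (T s).comp (T t))
    (hTcont : ∀ x : X, ContinuousOn (fun t => T t x) (Set.Ici 0))
    (A : X →ₗ.[ℂ] X)
    (hgen : ∀ (x y : X), (∃ hx : x ∈ A.domain, A ⟨x, hx⟩ = y) ↔
      Filter.Tendsto (fun t : ℝ => t⁻¹ • ((T t) x - x))
        (nhdsWithin 0 (Set.Ioi 0)) (nhds y))
    (ω : ℝ) (b : ℕ → ℝ)
    (hb : Filter.Tendsto (fun n => |b n|) Filter.atTop Filter.atTop)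
    (u : ℕ → A.domain) (hu : ∀ n, ‖(u n : X)‖ = 1)
    (hAu : Filter.Tendsto
      (fun n => ‖((ω : ℂ) + (b n : ℂ) * Complex.I) • (u n : X) - A (u n)‖)
      Filter.atTop (nhds 0))
    (y : X →L[ℂ] ℂ)
    (hy : ∃ z : X →L[ℂ] ℂ, ∀ v : A.domain, z (v : X) = y (A v)) :
    Filter.Tendsto (fun n => y (u n : X)) Filter.atTop (nhds 0) := by
  obtain ⟨z, hz⟩ := hy
  rw [tendsto_zero_iff_norm_tendsto_zero]
  set μ : ℕ → ℂ := fun n => (ω : ℂ) + (b n : ℂ) * Complex.I with hμ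
  have hμb : ∀ n, |b n| ≤ ‖μ n‖ := by
    intro n
    have := Complex.abs_im_le_norm (μ n)
    simpa [hμ] using this
  have hb1 : ∀ᶠ n in Filter.atTop, 1 ≤ |b n| := hb.eventually_ge_atTop 1
  have hr1 : ∀ᶠ n in Filter.atTop,
      ‖μ n • (u n : X) - A (u n)‖ ≤ 1 :=
    (hAu.eventually_lt_const (by norm_num : (0:ℝ) < 1)).mono fun n h => h.le
  have hbd : ∀ᶠ n in Filter.atTop,
      ‖y (u n : X)‖ ≤ (‖y‖ + ‖z‖) / |b n| := by
    filter_upwards [hb1, hr1] with n h1 hr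
    have hμpos : (0:ℝ) < ‖μ n‖ := lt_of_lt_of_le (lt_of_lt_of_le one_pos h1) (hμb n)
    have hμne : μ n ≠ 0 := by simpa using hμpos.ne'
    have key : μ n * y (u n : X) = y (μ n • (u n : X) - A (u n)) + z (u n : X) := by
      rw [map_sub, hz]
      simp [map_smul]
    have h2 : ‖y (u n : X)‖ = ‖μ n * y (u n : X)‖ / ‖μ n‖ := by
      rw [norm_mul]
      rw [mul_comm, mul_div_assoc, div_self hμpos.ne', mul_one]
    rw [h2, key]
    have hnum : ‖y (μ n • (u n : X) - A (u n)) + z (u n : X)‖ ≤ ‖y‖ + ‖z‖ := by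
      refine (norm_add_le _ _).trans (add_le_add ?_ ?_)
      · calc ‖y (μ n • (u n : X) - A (u n))‖ ≤ ‖y‖ * ‖μ n • (u n : X) - A (u n)‖ :=
              y.le_opNorm _
          _ ≤ ‖y‖ * 1 := by
              exact mul_le_mul_of_nonneg_left hr (norm_nonneg _)
          _ = ‖y‖ := mul_one _
      · calc ‖z (u n : X)‖ ≤ ‖z‖ * ‖(u n : X)‖ := z.le_opNorm _
          _ = ‖z‖ := by rw [hu n, mul_one]
    exact div_le_div₀ (by positivity) hnum (lt_of_lt_of_le one_pos h1) (hμb n)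
  have hlim : Filter.Tendsto (fun n => (‖y‖ + ‖z‖) / |b n|) Filter.atTop (nhds 0) :=
    Filter.Tendsto.div_atTop tendsto_const_nhds hb
  exact squeeze_zero' (Filter.Eventually.of_forall fun n => norm_nonneg _) hbd hlim
end

section
/- Let (T(t))_{t≥0} be a C₀-semigroup on a Banach space X with generator A, and define ‖x‖₁ = sup{|⟨x, x*⟩| : x* ∈ D(A*), ‖x*‖ ≤ 1}. Then ‖·‖₁ is an equivalent norm on X satisfying ‖x‖₁ ≤ ‖x‖ ≤ α‖x‖₁ for all x ∈ X, where α = limsup_{t→0} ‖T(t)‖. Moreover, D(A*) is a norming set for (X, ‖·‖₁). -/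
/-!
For `x* ∈ X*` and `t > 0`, the averaged functional `x ↦ t⁻¹ ∫₀ᵗ x*(T(s)x) ds` lies in `D(A*)`:
by the fundamental theorem of calculus along orbits, its composition with `A` is the bounded
functional `t⁻¹ (x* ∘ T(t) - x*)`. Its norm is at most `‖x*‖ sup_{0<s≤t} ‖T(s)‖`, which is below
any `β > α` once `t` is small (the semigroup is locally bounded by uniform boundedness), and its
value at `x` tends to `x*(x)` as `t → 0`. Taking `x*` norming for `x` gives `‖x‖ ≤ β ‖x‖₁`.
The remaining claims hold for the supremum over the unit ball of any subspace `D ⊆ X*`: since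
`|y z| ≤ ‖y‖ ‖z‖₁ ≤ ‖y‖ ‖z‖`, the `‖·‖₁`-dual norm of `y ∈ D` is `‖y‖`.
-/

open Set Filter Topology

section

variable {𝕜 E : Type*} [RCLike 𝕜] [NormedAddCommGroup E] [NormedSpace 𝕜 E]

noncomputable def dualSupSeminorm (D : Submodule 𝕜 (E →L[𝕜] 𝕜)) : Seminorm 𝕜 E :=
  ⨆ y : {y : E →L[𝕜] 𝕜 // y ∈ D ∧ ‖y‖ ≤ 1}, (normSeminorm 𝕜 𝕜).comp (y.1 : E →ₗ[𝕜] 𝕜)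

namespace dualSupSeminorm

variable (D : Submodule 𝕜 (E →L[𝕜] 𝕜))

theorem apply_eq_sSup (x : E) :
    dualSupSeminorm D x = sSup {r | ∃ y ∈ D, ‖y‖ ≤ 1 ∧ r = ‖y x‖} := by
  have hbdd : BddAbove (range fun y : {y : E →L[𝕜] 𝕜 // y ∈ D ∧ ‖y‖ ≤ 1} ↦
      (normSeminorm 𝕜 𝕜).comp (y.1 : E →ₗ[𝕜] 𝕜)) :=
    Seminorm.bddAbove_range_iff.2 fun z ↦
      ⟨‖z‖, forall_mem_range.2 fun y ↦ (y.1.le_of_opNorm_le y.2.2 z).trans_eq (one_mul _)⟩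
  rw [dualSupSeminorm, Seminorm.iSup_apply hbdd, iSup]
  congr 1
  ext r
  simp [eq_comm, and_assoc]

theorem le_norm (x : E) : dualSupSeminorm D x ≤ ‖x‖ := by
  rw [apply_eq_sSup]
  refine Real.sSup_le ?_ (norm_nonneg x)
  rintro _ ⟨y, -, hy, rfl⟩
  exact (y.le_of_opNorm_le hy x).trans_eq (one_mul _)

theorem norm_apply_le {y : E →L[𝕜] 𝕜} (hy : y ∈ D) (hy1 : ‖y‖ ≤ 1) (x : E) :
    ‖y x‖ ≤ dualSupSeminorm D x := by
  rw [apply_eq_sSup]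
  refine le_csSup ⟨‖x‖, ?_⟩ ⟨y, hy, hy1, rfl⟩
  rintro _ ⟨y, -, hy, rfl⟩
  exact (y.le_of_opNorm_le hy x).trans_eq (one_mul _)

theorem norm_apply_le_norm_mul {y : E →L[𝕜] 𝕜} (hy : y ∈ D) (x : E) :
    ‖y x‖ ≤ ‖y‖ * dualSupSeminorm D x := by
  rcases eq_or_ne y 0 with rfl | hy0
  · simp
  have hny : 0 < ‖y‖ := norm_pos_iff.2 hy0
  have hc : ‖((‖y‖⁻¹ : ℝ) : 𝕜)‖ = ‖y‖⁻¹ := by simp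
  have h := norm_apply_le D (D.smul_mem ((‖y‖⁻¹ : ℝ) : 𝕜) hy)
    (by rw [norm_smul, hc, inv_mul_cancel₀ hny.ne']) x
  rw [smul_apply, norm_smul, hc, inv_mul_le_iff₀ hny] at h
  exact h

theorem sSup_norm_apply_unitBall_eq_norm {y : E →L[𝕜] 𝕜} (hy : y ∈ D) :
    sSup {s | ∃ z, dualSupSeminorm D z ≤ 1 ∧ s = ‖y z‖} = ‖y‖ := by
  set Q := {s | ∃ z, dualSupSeminorm D z ≤ 1 ∧ s = ‖y z‖}
  have hQ : ∀ s ∈ Q, s ≤ ‖y‖ := by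
    rintro _ ⟨z, hz, rfl⟩
    exact (norm_apply_le_norm_mul D hy z).trans (mul_le_of_le_one_right (norm_nonneg y) hz)
  refine le_antisymm (Real.sSup_le hQ (norm_nonneg y)) ?_
  refine y.opNorm_le_bound (Real.sSup_nonneg (by rintro _ ⟨z, -, rfl⟩; positivity)) fun z ↦ ?_
  rcases eq_or_ne z 0 with rfl | hz0
  · simp
  have hnz : 0 < ‖z‖ := norm_pos_iff.2 hz0
  have hc : ‖((‖z‖⁻¹ : ℝ) : 𝕜)‖ = ‖z‖⁻¹ := by simp
  have hw : dualSupSeminorm D (((‖z‖⁻¹ : ℝ) : 𝕜) • z) ≤ 1 := by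
    rw [map_smul_eq_mul, hc, inv_mul_le_iff₀ hnz, mul_one]
    exact le_norm D z
  have h := le_csSup ⟨‖y‖, hQ⟩ ⟨_, hw, rfl⟩
  rwa [map_smul, norm_smul, hc, inv_mul_le_iff₀ hnz, mul_comm] at h

theorem eq_sSup_norm_apply_div_norm (x : E) :
    dualSupSeminorm D x = sSup {r | ∃ y ∈ D, y ≠ 0 ∧ r = ‖y x‖ / ‖y‖} := by
  set R := {r | ∃ y ∈ D, y ≠ 0 ∧ r = ‖y x‖ / ‖y‖}
  have hR : ∀ r ∈ R, r ≤ dualSupSeminorm D x := by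
    rintro _ ⟨y, hy, hy0, rfl⟩
    rw [div_le_iff₀ (norm_pos_iff.2 hy0), mul_comm]
    exact norm_apply_le_norm_mul D hy x
  refine le_antisymm ?_ (Real.sSup_le hR (apply_nonneg _ x))
  have hR0 : 0 ≤ sSup R := Real.sSup_nonneg (by rintro _ ⟨y, -, -, rfl⟩; positivity)
  rw [apply_eq_sSup]
  refine Real.sSup_le ?_ hR0
  rintro _ ⟨y, hy, hy1, rfl⟩
  rcases eq_or_ne y 0 with rfl | hy0
  · simpa using hR0
  calc ‖y x‖ ≤ ‖y x‖ / ‖y‖ := le_div_self (norm_nonneg _) (norm_pos_iff.2 hy0) hy1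
    _ ≤ sSup R := le_csSup ⟨_, hR⟩ ⟨y, hy, hy0, rfl⟩

end dualSupSeminorm

def adjointDomain {F : Type*} [NormedAddCommGroup F] [NormedSpace 𝕜 F] (A : E →ₗ.[𝕜] F) :
    Submodule 𝕜 (F →L[𝕜] 𝕜) where
  carrier := {y | ∃ z : E →L[𝕜] 𝕜, ∀ v : A.domain, z v = y (A v)}
  add_mem' := by
    rintro y₁ y₂ ⟨z₁, h₁⟩ ⟨z₂, h₂⟩
    exact ⟨z₁ + z₂, fun v ↦ by simp [h₁, h₂]⟩
  zero_mem' := ⟨0, fun v ↦ by simp⟩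
  smul_mem' := by
    rintro c y ⟨z, h⟩
    exact ⟨c • z, fun v ↦ by simp [h]⟩

theorem IsCompact.exists_forall_norm_le_of_continuousOn_apply {α F : Type*} [TopologicalSpace α]
    [CompleteSpace E] [NormedAddCommGroup F] [NormedSpace 𝕜 F] {K : Set α} (hK : IsCompact K)
    {T : α → E →L[𝕜] F} (hT : ∀ x, ContinuousOn (fun t ↦ T t x) K) :
    ∃ C, ∀ t ∈ K, ‖T t‖ ≤ C := by
  obtain ⟨C, hC⟩ := banach_steinhaus (g := fun t : K ↦ T t) fun x ↦
    (hK.exists_bound_of_continuousOn (hT x)).imp fun C hC t ↦ hC t t.2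
  exact ⟨C, fun t ht ↦ hC ⟨t, ht⟩⟩

section RealIntegral

variable {F : Type*} [NormedAddCommGroup F] [NormedSpace ℝ F]

theorem norm_inv_smul_intervalIntegral_le {f : ℝ → F} {t B : ℝ} (ht : 0 < t)
    (hf : ∀ s ∈ Ioc 0 t, ‖f s‖ ≤ B) : ‖t⁻¹ • ∫ s in 0..t, f s‖ ≤ B := by
  have h := intervalIntegral.norm_integral_le_of_norm_le_const (a := 0) (b := t)
    (by rwa [uIoc_of_le ht.le])
  rw [norm_smul, norm_inv, Real.norm_of_nonneg ht.le, inv_mul_le_iff₀ ht]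
  simpa [abs_of_pos ht, mul_comm] using h

theorem tendsto_inv_smul_intervalIntegral_nhdsGT [CompleteSpace F] {f : ℝ → F}
    (hf : ContinuousOn f (Ici 0)) :
    Tendsto (fun t ↦ t⁻¹ • ∫ s in 0..t, f s) (𝓝[>] 0) (𝓝 (f 0)) := by
  have hderiv : HasDerivWithinAt (fun t ↦ ∫ s in 0..t, f s) (f 0) (Ici 0) 0 :=
    intervalIntegral.integral_hasDerivWithinAt_right (by simp)
      ((hf.mono Ioi_subset_Ici_self).stronglyMeasurableAtFilter_nhdsWithin measurableSet_Ioi 0)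
      ((hf 0 self_mem_Ici).mono Ioi_subset_Ici_self)
  refine ((hasDerivWithinAt_iff_tendsto_slope' self_notMem_Ioi).1
    (hasDerivWithinAt_Ioi_iff_Ici.2 hderiv)).congr fun t ↦ ?_
  simp [slope_def_module]

end RealIntegral

section Semigroup

variable {X : Type*} [NormedAddCommGroup X] [NormedSpace 𝕜 X] {T : ℝ → X →L[𝕜] X}

theorem isBoundedUnder_norm_nhdsGT_zero [CompleteSpace X]
    (hTcont : ∀ x, ContinuousOn (fun t ↦ T t x) (Ici 0)) :
    IsBoundedUnder (· ≤ ·) (𝓝[>] 0) fun t ↦ ‖T t‖ := by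
  obtain ⟨C, hC⟩ := isCompact_Icc.exists_forall_norm_le_of_continuousOn_apply
    fun x ↦ (hTcont x).mono (Icc_subset_Ici_self : Icc (0 : ℝ) 1 ⊆ Ici 0)
  exact isBoundedUnder_of_eventually_le <| mem_of_superset (Ioo_mem_nhdsGT one_pos)
    fun t ht ↦ hC t (Ioo_subset_Icc_self ht)

theorem exists_eq_inv_smul_intervalIntegral_apply_semigroup_apply
    (hTcont : ∀ x, ContinuousOn (fun t ↦ T t x) (Ici 0)) (g : X →L[𝕜] 𝕜) {t C : ℝ} (ht : 0 < t)
    (hC : ∀ s ∈ Ioc 0 t, ‖T s‖ ≤ C) :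
    ∃ φ : X →L[𝕜] 𝕜, (∀ x, φ x = t⁻¹ • ∫ s in 0..t, g (T s x)) ∧ ‖φ‖ ≤ ‖g‖ * C := by
  have hint : ∀ x, IntervalIntegrable (fun s ↦ g (T s x)) MeasureTheory.volume 0 t := fun x ↦
    (g.continuous.comp_continuousOn ((hTcont x).mono Icc_subset_Ici_self)).intervalIntegrable_of_Icc
      ht.le
  let φ : X →ₗ[𝕜] 𝕜 :=
    { toFun x := t⁻¹ • ∫ s in 0..t, g (T s x)
      map_add' x y := by
        simp only [map_add, intervalIntegral.integral_add (hint x) (hint y), smul_add]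
      map_smul' c x := by
        simp only [map_smul, smul_eq_mul, intervalIntegral.integral_const_mul, RingHom.id_apply,
          mul_smul_comm] }
  have hbound : ∀ x, ‖φ x‖ ≤ ‖g‖ * C * ‖x‖ := fun x ↦
    norm_inv_smul_intervalIntegral_le ht fun s hs ↦ calc
      ‖g (T s x)‖ ≤ ‖g‖ * (‖T s‖ * ‖x‖) := g.le_of_opNorm_le_of_le le_rfl ((T s).le_opNorm x)
      _ ≤ ‖g‖ * C * ‖x‖ := by rw [← mul_assoc]; gcongr; exact hC s hs
  have hC0 : 0 ≤ C := (norm_nonneg _).trans (hC t ⟨ht, le_rfl⟩)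
  exact ⟨φ.mkContinuous _ hbound, fun x ↦ rfl, LinearMap.mkContinuous_norm_le _ (by positivity) _⟩

variable [NormedSpace ℝ X] [IsScalarTower ℝ 𝕜 X]

theorem hasDerivWithinAt_semigroup_apply
    (hTadd : ∀ s t : ℝ, 0 ≤ s → 0 ≤ t → T (s + t) = (T s).comp (T t)) {v w : X}
    (hv : Tendsto (fun t : ℝ ↦ t⁻¹ • (T t v - v)) (𝓝[>] 0) (𝓝 w)) {s : ℝ} (hs : 0 ≤ s) :
    HasDerivWithinAt (fun u ↦ T u v) (T s w) (Ioi s) s := by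
  rw [hasDerivWithinAt_iff_tendsto_slope' self_notMem_Ioi]
  have hshift : Tendsto (fun u ↦ u - s) (𝓝[>] s) (𝓝[>] 0) := by
    simpa using (continuous_sub_right s).continuousWithinAt.tendsto_nhdsWithin (x := s)
      (s := Ioi s) (t := Ioi 0) fun u hu ↦ sub_pos.2 hu
  refine ((T s).continuous.tendsto w |>.comp (hv.comp hshift)).congr' ?_
  filter_upwards [self_mem_nhdsWithin] with u hu
  have hTu : T u = (T s).comp (T (u - s)) := by
    rw [← hTadd s (u - s) hs (sub_pos.2 hu).le, add_sub_cancel]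
  simp [slope_def_module, hTu]

theorem intervalIntegral_apply_semigroup_apply (hT0 : T 0 = 1)
    (hTadd : ∀ s t : ℝ, 0 ≤ s → 0 ≤ t → T (s + t) = (T s).comp (T t))
    (hTcont : ∀ x, ContinuousOn (fun t ↦ T t x) (Ici 0)) {v w : X}
    (hv : Tendsto (fun t : ℝ ↦ t⁻¹ • (T t v - v)) (𝓝[>] 0) (𝓝 w)) (g : X →L[𝕜] 𝕜) {t : ℝ}
    (ht : 0 ≤ t) : ∫ s in 0..t, g (T s w) = g (T t v) - g v := by
  have hcont : ∀ x, ContinuousOn (fun s ↦ g (T s x)) (Icc 0 t) := fun x ↦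
    g.continuous.comp_continuousOn ((hTcont x).mono Icc_subset_Ici_self)
  rw [intervalIntegral.integral_eq_sub_of_hasDeriv_right_of_le (f := fun s ↦ g (T s v))
    (f' := fun s ↦ g (T s w)) ht (hcont v)
    (fun s hs ↦ (g.restrictScalars ℝ).hasFDerivAt.comp_hasDerivWithinAt s
      (hasDerivWithinAt_semigroup_apply hTadd hv hs.1.le))
    ((hcont w).intervalIntegrable_of_Icc ht), hT0]
  rfl

theorem mem_adjointDomain_of_eq_inv_smul_intervalIntegral (hT0 : T 0 = 1)
    (hTadd : ∀ s t : ℝ, 0 ≤ s → 0 ≤ t → T (s + t) = (T s).comp (T t))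
    (hTcont : ∀ x, ContinuousOn (fun t ↦ T t x) (Ici 0)) {A : X →ₗ.[𝕜] X}
    (hA : ∀ v : A.domain, Tendsto (fun t : ℝ ↦ t⁻¹ • (T t v - v)) (𝓝[>] 0) (𝓝 (A v)))
    {g φ : X →L[𝕜] 𝕜} {t : ℝ} (ht : 0 ≤ t) (hφ : ∀ x, φ x = t⁻¹ • ∫ s in 0..t, g (T s x)) :
    φ ∈ adjointDomain A :=
  ⟨t⁻¹ • (g.comp (T t) - g), fun v ↦ by
    rw [hφ, intervalIntegral_apply_semigroup_apply hT0 hTadd hTcont (hA v) g ht]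
    rfl⟩

theorem norm_le_limsup_mul_dualSupSeminorm_adjointDomain [CompleteSpace X] (hT0 : T 0 = 1)
    (hTadd : ∀ s t : ℝ, 0 ≤ s → 0 ≤ t → T (s + t) = (T s).comp (T t))
    (hTcont : ∀ x, ContinuousOn (fun t ↦ T t x) (Ici 0)) {A : X →ₗ.[𝕜] X}
    (hA : ∀ v : A.domain, Tendsto (fun t : ℝ ↦ t⁻¹ • (T t v - v)) (𝓝[>] 0) (𝓝 (A v))) (x : X) :
    ‖x‖ ≤ limsup (fun t ↦ ‖T t‖) (𝓝[>] 0) * dualSupSeminorm (adjointDomain A) x := by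
  set α := limsup (fun t ↦ ‖T t‖) (𝓝[>] 0)
  set N := dualSupSeminorm (adjointDomain A)
  rcases eq_or_ne x 0 with rfl | hx
  · simp
  obtain ⟨g, hg1, hgx⟩ := exists_dual_vector 𝕜 x (norm_ne_zero_iff.2 hx)
  refine ge_of_tendsto ((continuous_mul_const (N x)).tendsto α |>.mono_left nhdsWithin_le_nhds)
    (eventually_nhdsWithin_of_forall (s := Ioi α) fun β hβ ↦ ?_)
  obtain ⟨t₀, ht₀, hsub⟩ := mem_nhdsGT_iff_exists_Ioo_subset.1 <|
    eventually_lt_of_limsup_lt hβ (isBoundedUnder_norm_nhdsGT_zero hTcont)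
  have hle : ∀ t ∈ Ioo 0 t₀, ‖t⁻¹ • ∫ s in 0..t, g (T s x)‖ ≤ β * N x := by
    rintro t ⟨ht, htt₀⟩
    obtain ⟨φ, hφ, hφβ⟩ := exists_eq_inv_smul_intervalIntegral_apply_semigroup_apply hTcont g ht
      (C := β) fun s hs ↦ (hsub ⟨hs.1, hs.2.trans_lt htt₀⟩).le
    rw [← hφ]
    calc ‖φ x‖ ≤ ‖φ‖ * N x := dualSupSeminorm.norm_apply_le_norm_mul _
          (mem_adjointDomain_of_eq_inv_smul_intervalIntegral hT0 hTadd hTcont hA ht.le hφ) x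
      _ ≤ β * N x := by gcongr; simpa [hg1] using hφβ
  have hlim : Tendsto (fun t ↦ ‖t⁻¹ • ∫ s in 0..t, g (T s x)‖) (𝓝[>] 0) (𝓝 ‖x‖) := by
    simpa [hT0, hgx] using
      (tendsto_inv_smul_intervalIntegral_nhdsGT (g.continuous.comp_continuousOn (hTcont x))).norm
  exact le_of_tendsto hlim (mem_of_superset (Ioo_mem_nhdsGT ht₀) hle)

end Semigroup

end

/-- The norm `‖x‖₁ = sup{|⟨x,x*⟩| : x* ∈ D(A*), ‖x*‖ ≤ 1}` is an equivalent norm with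
`‖x‖₁ ≤ ‖x‖ ≤ α‖x‖₁`, where `α = limsup_{t→0⁺} ‖T(t)‖`, and `D(A*)` is a norming set
for `(X, ‖·‖₁)`. -/
theorem stmt_16 (X : Type*) [NormedAddCommGroup X] [NormedSpace ℂ X] [CompleteSpace X]
    (T : ℝ → X →L[ℂ] X) (hT0 : T 0 = 1)
    (hTadd : ∀ s t : ℝ, 0 ≤ s → 0 ≤ t → T (s + t) = (T s).comp (T t))
    (hTcont : ∀ x : X, ContinuousOn (fun t => T t x) (Set.Ici 0))
    (A : X →ₗ.[ℂ] X)
    (hgen : ∀ (x y : X), (∃ hx : x ∈ A.domain, A ⟨x, hx⟩ = y) ↔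
      Filter.Tendsto (fun t : ℝ => t⁻¹ • ((T t) x - x))
        (nhdsWithin 0 (Set.Ioi 0)) (nhds y))
    (Dstar : Set (X →L[ℂ] ℂ))
    (hDstar : Dstar = {y : X →L[ℂ] ℂ | ∃ z : X →L[ℂ] ℂ, ∀ v : A.domain, z (v : X) = y (A v)})
    (N : X → ℝ)
    (hN : ∀ x : X, N x = sSup {r : ℝ | ∃ y ∈ Dstar, ‖y‖ ≤ 1 ∧ r = ‖y x‖})
    (α : ℝ)
    (hα : α = Filter.limsup (fun t => ‖T t‖) (nhdsWithin 0 (Set.Ioi 0))) :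
    (∀ x : X, N x ≤ ‖x‖ ∧ ‖x‖ ≤ α * N x) ∧
    (∀ x y : X, N (x + y) ≤ N x + N y) ∧
    (∀ (c : ℂ) (x : X), N (c • x) = ‖c‖ * N x) ∧
    (∀ x : X, N x = 0 → x = 0) ∧
    (∀ x : X, N x = sSup {r : ℝ | ∃ y ∈ Dstar, y ≠ 0 ∧
      r = ‖y x‖ / sSup {s : ℝ | ∃ z : X, N z ≤ 1 ∧ s = ‖y z‖}}) := by
  obtain rfl : Dstar = adjointDomain A := hDstar
  obtain rfl : N = dualSupSeminorm (adjointDomain A) :=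
    funext fun x ↦ (hN x).trans (dualSupSeminorm.apply_eq_sSup _ x).symm
  subst hα
  have hkey := norm_le_limsup_mul_dualSupSeminorm_adjointDomain hT0 hTadd hTcont
    fun v ↦ (hgen v (A v)).1 ⟨v.2, rfl⟩
  refine ⟨fun x ↦ ⟨dualSupSeminorm.le_norm _ x, hkey x⟩, map_add_le_add _, map_smul_eq_mul _,
    fun x hx ↦ norm_le_zero_iff.1 (by simpa [hx] using hkey x), fun x ↦ ?_⟩
  rw [dualSupSeminorm.eq_sSup_norm_apply_div_norm]
  refine congrArg sSup (Set.ext fun r ↦ exists_congr fun y ↦ and_congr_right fun hy ↦ ?_)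
  rw [dualSupSeminorm.sSup_norm_apply_unitBall_eq_norm _ hy]
end
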